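/- arXiv:2502.20828 — 9 statements merged into one kernel-verified Lean document; each statement's English description precedes it below -/
import Mathlib

section
/- For every positive integer M and every integer f with 1 ≤ f ≤ M-1, ∑_{m=0}^{M-1} (1/2 - m/M + m²/M²)·exp(2πi·f·m/M) = 1/(M·(1 - cos(2π f/M))). -/
open Finset in
lemma aux2 (x : ℂ) (n : ℕ) :
    (x - 1) ^ 2 * ∑ m ∈ range n, (m : ℂ) * x ^ m =
      ((n : ℂ) - 1) * x ^ (n + 1) - (n : ℂ) * x ^ n + x := by
  induction n with
  | zero => simp
  | succ n ih =>
    rw [sum_range_succ, mul_add, ih]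
    push_cast
    ring

open Finset in
lemma aux3 (x : ℂ) (n : ℕ) :
    (x - 1) ^ 3 * ∑ m ∈ range n, (m : ℂ) ^ 2 * x ^ m =
      ((n : ℂ) - 1) ^ 2 * x ^ (n + 2) - (2 * (n : ℂ) ^ 2 - 2 * n - 1) * x ^ (n + 1)
        + (n : ℂ) ^ 2 * x ^ n - x ^ 2 - x := by
  induction n with
  | zero => simp
  | succ n ih =>
    rw [sum_range_succ, mul_add, ih]
    push_cast
    ring

open Complex in
theorem stmt_2 (M : ℕ) (hM : 0 < M) (f : ℕ) (hf1 : 1 ≤ f) (hfM : f ≤ M - 1) :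
    ∑ m ∈ Finset.range M,
        (((1 : ℝ) / 2 - (m : ℝ) / M + (m : ℝ) ^ 2 / (M : ℝ) ^ 2 : ℝ) : ℂ) *
          Complex.exp (2 * Real.pi * Complex.I * f * m / M) =
      1 / ((M : ℂ) * (1 - Real.cos (2 * Real.pi * f / M))) := by
  have hM0 : (M : ℂ) ≠ 0 := Nat.cast_ne_zero.mpr hM.ne'
  have hMR : (0 : ℝ) < M := Nat.cast_pos.mpr hM
  have hfM' : f < M := lt_of_le_of_lt hfM (Nat.sub_lt hM one_pos)
  set θ : ℝ := 2 * Real.pi * f / M with hθ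
  set x : ℂ := Complex.exp ((θ : ℂ) * I) with hxdef
  -- θ ∈ (0, 2π)
  have hθpos : 0 < θ := by
    apply div_pos (by positivity) hMR
  have hθlt : θ < 2 * Real.pi := by
    rw [hθ, div_lt_iff₀ hMR]
    have : (f : ℝ) < M := Nat.cast_lt.mpr hfM'
    nlinarith [Real.pi_pos]
  have hcos : Real.cos θ < 1 := by
    rcases lt_or_eq_of_le (Real.cos_le_one θ) with h | h
    · exact h
    · exfalso
      have := (Real.cos_eq_one_iff_of_lt_of_lt
        (by linarith [Real.two_pi_pos] : -(2 * Real.pi) < θ) hθlt).mp h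
      linarith
  have hcosC : (1 : ℂ) - (Real.cos θ : ℂ) ≠ 0 := by
    intro h
    have : (Real.cos θ : ℂ) = 1 := by linear_combination -h
    have : Real.cos θ = 1 := by exact_mod_cast this
    linarith
  -- x ≠ 1
  have hx1 : x ≠ 1 := by
    intro h
    have : x.re = 1 := by rw [h]; simp
    rw [hxdef, Complex.exp_ofReal_mul_I_re] at this
    linarith
  have hx1' : x - 1 ≠ 0 := sub_ne_zero.mpr hx1
  have hx0 : x ≠ 0 := Complex.exp_ne_zero _
  -- x ^ M = 1
  have hxM : x ^ M = 1 := by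
    rw [hxdef, ← Complex.exp_nat_mul]
    have : (M : ℂ) * ((θ : ℂ) * I) = (f : ℂ) * (2 * Real.pi * I) := by
      rw [hθ]
      push_cast
      field_simp
    rw [this, Complex.exp_nat_mul, Complex.exp_two_pi_mul_I, one_pow]
  -- rewrite each exponential as x ^ m
  have hterm : ∀ m : ℕ, Complex.exp (2 * Real.pi * Complex.I * f * m / M) = x ^ m := by
    intro m
    rw [hxdef, ← Complex.exp_nat_mul]
    congr 1
    rw [hθ]
    push_cast
    field_simp
  -- the three basic sums
  set A := ∑ m ∈ Finset.range M, x ^ m with hA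
  set B := ∑ m ∈ Finset.range M, (m : ℂ) * x ^ m with hB
  set C := ∑ m ∈ Finset.range M, (m : ℂ) ^ 2 * x ^ m with hC
  have h1 : A = 0 := by
    have := geom_sum_mul x M
    rw [hxM, sub_self] at this
    rcases mul_eq_zero.mp this with h | h
    · exact h
    · exact absurd h hx1'
  have hxM1 : x ^ (M + 1) = x := by rw [pow_succ, hxM, one_mul]
  have hxM2 : x ^ (M + 2) = x ^ 2 := by
    rw [show M + 2 = M + 1 + 1 from rfl, pow_succ, hxM1]; ring
  have h2 : (x - 1) ^ 2 * B = (M : ℂ) * (x - 1) := by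
    have h := aux2 x M
    rw [hxM1, hxM] at h
    rw [hB]
    linear_combination h
  have h3 : (x - 1) ^ 3 * C =
      ((M : ℂ) ^ 2 - 2 * M) * x ^ 2 - (2 * (M : ℂ) ^ 2 - 2 * M) * x + M ^ 2 := by
    have h := aux3 x M
    rw [hxM2, hxM1, hxM] at h
    rw [hC]
    linear_combination h
  -- express the goal sum in terms of A, B, C
  have hsum : ∑ m ∈ Finset.range M,
        (((1 : ℝ) / 2 - (m : ℝ) / M + (m : ℝ) ^ 2 / (M : ℝ) ^ 2 : ℝ) : ℂ) *
          Complex.exp (2 * Real.pi * Complex.I * f * m / M) =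
      (1 / 2) * A - (1 / (M : ℂ)) * B + (1 / (M : ℂ) ^ 2) * C := by
    rw [hA, hB, hC, Finset.mul_sum, Finset.mul_sum, Finset.mul_sum,
      ← Finset.sum_sub_distrib, ← Finset.sum_add_distrib]
    apply Finset.sum_congr rfl
    intro m _
    rw [hterm m]
    push_cast
    field_simp
  rw [hsum]
  -- closed form: the sum equals -2x / (M (x-1)^2)
  have hT : (1 / 2) * A - (1 / (M : ℂ)) * B + (1 / (M : ℂ) ^ 2) * C =
      -2 * x / ((M : ℂ) * (x - 1) ^ 2) := by
    rw [h1]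
    have key : ((M : ℂ) ^ 2 * (x - 1) ^ 3) *
        ((1 / 2) * 0 - (1 / (M : ℂ)) * B + (1 / (M : ℂ) ^ 2) * C) =
        ((M : ℂ) ^ 2 * (x - 1) ^ 3) * (-2 * x / ((M : ℂ) * (x - 1) ^ 2)) := by
      have e1 : ((M : ℂ) ^ 2 * (x - 1) ^ 3) * ((1 / 2) * 0 - (1 / (M : ℂ)) * B
          + (1 / (M : ℂ) ^ 2) * C) =
          -(M : ℂ) * (x - 1) * ((x - 1) ^ 2 * B) + (x - 1) ^ 3 * C := by
        field_simp
        ring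
      rw [e1, h2, h3]
      field_simp
      ring
    have hne : ((M : ℂ) ^ 2 * (x - 1) ^ 3) ≠ 0 := by
      apply mul_ne_zero (pow_ne_zero _ hM0) (pow_ne_zero _ hx1')
    exact mul_left_cancel₀ hne key
  rw [hT]
  -- relate (x-1)^2 to 1 - cos θ
  have hc : (x - 1) ^ 2 = x * (2 * (Real.cos θ : ℂ) - 2) := by
    have h2c : 2 * Complex.cos (θ : ℂ) = Complex.exp ((θ : ℂ) * I) + Complex.exp (-(θ : ℂ) * I) :=
      Complex.two_cos (θ : ℂ)
    have hxinv : x * Complex.exp (-(θ : ℂ) * I) = 1 := by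
      rw [hxdef, ← Complex.exp_add]
      ring_nf
      exact Complex.exp_zero
    have hrc : ((Real.cos θ : ℝ) : ℂ) = Complex.cos (θ : ℂ) := Complex.ofReal_cos θ
    rw [hrc]
    rw [← hxdef] at h2c
    have hkey : x * (2 * Complex.cos (θ : ℂ)) = x ^ 2 + 1 := by
      rw [h2c, mul_add, hxinv]
      ring
    linear_combination -hkey
  rw [hc]
  have h2cos : (2 : ℂ) * (Real.cos θ : ℂ) - 2 ≠ 0 := by
    intro h
    apply hcosC
    linear_combination -h / 2
  rw [div_eq_div_iff (mul_ne_zero hM0 (mul_ne_zero hx0 h2cos)) (mul_ne_zero hM0 hcosC)]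
  ring
end

section
/- For every positive integer M and every integer f with 1 ≤ f ≤ M-1, ∑_{m=0}^{M-1} (1/2 - m/M + m²/M²)·exp(2πi·f·m/M) = 1/(2M·sin²(π f/M)). -/
/-!
Put `t = π f / M` and `x = exp (2 t i)`, an `M`-th root of unity different from `1`.
Summation by parts against the weights `x ^ m` turns `∑ m < M, w m * x ^ m` into boundary terms
plus `x * ∑ m < M, (w (m + 1) - w m) * x ^ m`. For `w m = M² - 2 M m + 2 m²` the boundary terms
cancel (`w M = w 0`), and a second summation by parts on the linear difference leaves
`(∑ m < M, w m * x ^ m) * (x - 1) ^ 2 = -4 M x`. Since `(x - 1) ^ 2 = -4 x sin² t`, this sum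
equals `M / sin² t`, and the left-hand side of the theorem is this sum divided by `2 M²`.
-/

open Finset Complex

theorem sum_range_mul_pow_mul_sub_one {R : Type*} [CommRing R] (a : ℕ → R) (x : R) (n : ℕ) :
    (∑ i ∈ range n, a i * x ^ i) * (x - 1) =
      a n * x ^ n - a 0 - x * ∑ i ∈ range n, (a (i + 1) - a i) * x ^ i := by
  induction n with
  | zero => simp
  | succ n ih =>
    simp only [sum_range_succ, add_mul, mul_add, ih]
    ring

theorem sum_range_quadratic_mul_pow_mul_sub_one_sq {R : Type*} [CommRing R] [IsDomain R]
    {x : R} {n : ℕ} (hxn : x ^ n = 1) (hx : x ≠ 1) :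
    (∑ m ∈ range n, ((n : R) ^ 2 - 2 * n * m + 2 * m ^ 2) * x ^ m) * (x - 1) ^ 2 =
      -4 * n * x := by
  have hgeom : ∑ m ∈ range n, x ^ m = 0 := by
    have h := geom_sum_mul x n
    rw [hxn, sub_self] at h
    exact (mul_eq_zero.mp h).resolve_right (sub_ne_zero.mpr hx)
  have hlin : (∑ m ∈ range n, (4 * (m : R) + 2 - 2 * n) * x ^ m) * (x - 1) = 4 * n := by
    have hstep (m : ℕ) : 4 * ((m + 1 : ℕ) : R) + 2 - 2 * n - (4 * m + 2 - 2 * n) = 4 := by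
      push_cast
      ring
    rw [sum_range_mul_pow_mul_sub_one (fun m : ℕ ↦ 4 * (m : R) + 2 - 2 * n), hxn]
    simp only [hstep, ← mul_sum, hgeom]
    push_cast
    ring
  have hquad (m : ℕ) : ((n : R) ^ 2 - 2 * n * ((m + 1 : ℕ) : R) + 2 * ((m + 1 : ℕ) : R) ^ 2) -
      ((n : R) ^ 2 - 2 * n * m + 2 * m ^ 2) = 4 * m + 2 - 2 * n := by
    push_cast
    ring
  rw [sq (x - 1), ← mul_assoc, sum_range_mul_pow_mul_sub_one
    (fun m : ℕ ↦ (n : R) ^ 2 - 2 * n * m + 2 * m ^ 2), hxn]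
  simp only [hquad]
  linear_combination (-x) * hlin

theorem exp_two_mul_mul_I_sub_one (z : ℂ) :
    exp (2 * z * I) - 1 = 2 * I * sin z * exp (z * I) := by
  have hinv : exp (-z * I) * exp (z * I) = 1 := by
    rw [← exp_add]
    simp
  rw [show 2 * z * I = z * I + z * I by ring, exp_add]
  linear_combination (-I * exp (z * I)) * two_sin z + hinv +
    (exp (z * I) ^ 2 - exp (z * I) * exp (-z * I)) * I_sq

theorem exp_two_mul_mul_I_sub_one_sq (z : ℂ) :
    (exp (2 * z * I) - 1) ^ 2 = -4 * exp (2 * z * I) * sin z ^ 2 := by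
  rw [exp_two_mul_mul_I_sub_one, show 2 * z * I = z * I + z * I by ring, exp_add]
  linear_combination (4 * sin z ^ 2 * exp (z * I) ^ 2) * I_sq

theorem sum_range_quadratic_mul_exp_pow_mul_sin_sq {z : ℂ} {n : ℕ}
    (hzn : exp (2 * z * I) ^ n = 1) (hz : sin z ≠ 0) :
    (∑ m ∈ range n, ((n : ℂ) ^ 2 - 2 * n * m + 2 * m ^ 2) * exp (2 * z * I) ^ m) * sin z ^ 2 =
      n := by
  have hx : -4 * exp (2 * z * I) ≠ 0 := mul_ne_zero (by norm_num) (exp_ne_zero _)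
  have hx1 : exp (2 * z * I) ≠ 1 := by
    rw [← sub_ne_zero, ← pow_ne_zero_iff two_ne_zero, exp_two_mul_mul_I_sub_one_sq]
    exact mul_ne_zero hx (pow_ne_zero 2 hz)
  have hS := sum_range_quadratic_mul_pow_mul_sub_one_sq hzn hx1
  rw [exp_two_mul_mul_I_sub_one_sq] at hS
  exact mul_right_cancel₀ hx (by linear_combination hS)

theorem Real.sin_pi_mul_div_pos {f M : ℕ} (hf : 0 < f) (hfM : f < M) :
    0 < Real.sin (Real.pi * f / M) := by
  have hM : (0 : ℝ) < M := by norm_cast; omega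
  refine Real.sin_pos_of_pos_of_lt_pi (by positivity) ?_
  rw [div_lt_iff₀ hM, mul_lt_mul_iff_right₀ Real.pi_pos]
  exact_mod_cast hfM

open Complex in
theorem stmt_3_general (M : ℕ) (f : ℕ) (hf1 : 1 ≤ f) (hfM : f ≤ M - 1) :
    ∑ m ∈ Finset.range M,
        (((1 : ℝ) / 2 - (m : ℝ) / M + (m : ℝ) ^ 2 / (M : ℝ) ^ 2 : ℝ) : ℂ) *
          Complex.exp (2 * Real.pi * Complex.I * f * m / M) =
      1 / (2 * (M : ℂ) * (Real.sin (Real.pi * f / M)) ^ 2) := by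
  have hM : (M : ℂ) ≠ 0 := by norm_cast; omega
  have hsin : (Real.sin (Real.pi * f / M) : ℂ) ≠ 0 :=
    ofReal_ne_zero.mpr (Real.sin_pi_mul_div_pos (by omega) (by omega)).ne'
  set t : ℝ := Real.pi * f / M with ht
  have hxM : exp (2 * t * I) ^ M = 1 := by
    rw [← exp_nat_mul, ← exp_nat_mul_two_pi_mul_I f]
    congr 1
    push_cast [ht]
    field_simp
  have hterm (m : ℕ) : exp (2 * Real.pi * I * f * m / M) = exp (2 * t * I) ^ m := by
    rw [← exp_nat_mul]
    congr 1
    push_cast [ht]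
    ring
  have hcoef (m : ℕ) : (((1 : ℝ) / 2 - (m : ℝ) / M + (m : ℝ) ^ 2 / (M : ℝ) ^ 2 : ℝ) : ℂ) =
      ((M : ℂ) ^ 2 - 2 * M * m + 2 * m ^ 2) / (2 * M ^ 2) := by
    push_cast
    field_simp
  have hS := sum_range_quadratic_mul_exp_pow_mul_sin_sq hxM (by rwa [← ofReal_sin])
  simp only [hterm, hcoef, div_mul_eq_mul_div, ← sum_div]
  rw [div_eq_div_iff (by simp [hM]) (mul_ne_zero (by simp [hM]) (pow_ne_zero 2 hsin)), ofReal_sin]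
  linear_combination 2 * (M : ℂ) * hS

open Complex in
theorem stmt_3 (M : ℕ) (hM : 0 < M) (f : ℕ) (hf1 : 1 ≤ f) (hfM : f ≤ M - 1) :
    ∑ m ∈ Finset.range M,
        (((1 : ℝ) / 2 - (m : ℝ) / M + (m : ℝ) ^ 2 / (M : ℝ) ^ 2 : ℝ) : ℂ) *
          Complex.exp (2 * Real.pi * Complex.I * f * m / M) =
      1 / (2 * (M : ℂ) * (Real.sin (Real.pi * f / M)) ^ 2) :=
  stmt_3_general M f hf1 hfM
end

section
/- For all integers M ≥ 2 and all m ∈ {0,1,...,M-1}, 1/2 - m/M + m²/M² = 1/3 + 1/(6M²) + (1/(2M²))·∑_{n=1}^{M-1} cos(2πmn/M)/sin²(πn/M). -/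
/-!
Write `θₙ = π n / M`. By the Fejér identity, `sin² (m θ) / sin² θ` is the sum of the Dirichlet
kernels `sin ((2j+1) θ) / sin θ = 1 + 2 ∑_{k=1}^{j} cos (2 k θ)` over `j < m`. For `0 < k < M` the
character sum `∑_{n=1}^{M-1} cos (2 π k n / M)` is `-1`; with `cos (2 m θ) = 1 - 2 sin² (m θ)`
this gives `∑_{n=1}^{M-1} cos (2 m θₙ) / sin² θₙ = T - 2 m (M - m)` for `m ≤ M`, where
`T = ∑_{n=1}^{M-1} 1 / sin² θₙ`.
Summing this over all `m < M` makes the cosines cancel, whence `M T = 2 ∑_{m<M} m (M - m)`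
and `T = (M² - 1) / 3`.
-/

open Finset Real

theorem sin_two_mul_add_one_mul (j : ℕ) (x : ℝ) :
    sin ((2 * j + 1) * x) = sin x * (1 + 2 * ∑ k ∈ range j, cos (2 * (k + 1) * x)) := by
  have hsum := sin_mul_sum_cos j (2 * x) (2 * x)
  have hprod := two_mul_sin_mul_cos (j * x) ((j + 1) * x)
  rw [show (j : ℝ) * (2 * x) / 2 = j * x by ring,
    show (j - 1 : ℝ) * (2 * x) / 2 + 2 * x = (j + 1) * x by ring,
    mul_div_cancel_left₀ x two_ne_zero] at hsum
  rw [show (j : ℝ) * x - (j + 1) * x = -x by ring, sin_neg,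
    show (j : ℝ) * x + (j + 1) * x = (2 * j + 1) * x by ring] at hprod
  simp_rw [show ∀ k : ℕ, 2 * ((k : ℝ) + 1) * x = 2 * x * k + 2 * x from fun k => by ring]
  linear_combination -2 * hsum - hprod

theorem sin_mul_sq_eq_sin_mul_sum_sin (m : ℕ) (x : ℝ) :
    sin (m * x) ^ 2 = sin x * ∑ j ∈ range m, sin ((2 * j + 1) * x) := by
  convert (sin_mul_sum_sin m (2 * x) x).symm using 4 <;> ring_nf

theorem sum_range_cos_two_pi_mul_div {M k : ℕ} (hk : ¬ M ∣ k) :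
    ∑ n ∈ range M, cos (2 * π * k * n / M) = 0 := by
  rcases Nat.eq_zero_or_pos M with rfl | hM
  · simp
  have hM' : (M : ℝ) ≠ 0 := by positivity
  have hfreq : ∀ z : ℤ, 2 * π * k / M ≠ z * (2 * π) := by
    intro z hz
    have : (k : ℝ) = M * z := by
      field_simp at hz
      nlinarith [pi_pos]
    exact hk (Int.natCast_dvd_natCast.mp ⟨z, by exact_mod_cast this⟩)
  have hsin : sin (M * (2 * π * k / M) / 2) = 0 := by
    rw [show (M : ℝ) * (2 * π * k / M) / 2 = k * π by field_simp]
    exact sin_nat_mul_pi k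
  have hsum := sum_cos M hfreq 0
  rw [hsin, zero_mul, zero_div] at hsum
  rw [← hsum]
  exact sum_congr rfl fun n _ => by ring_nf

theorem sum_Icc_cos_two_pi_mul_div {M k : ℕ} (hM : M ≠ 0) (hk : ¬ M ∣ k) :
    ∑ n ∈ Icc 1 (M - 1), cos (2 * π * k * n / M) = -1 := by
  have hrange : range M = insert 0 (Icc 1 (M - 1)) := by
    ext n; simp only [mem_range, mem_insert, mem_Icc]; omega
  have := sum_range_cos_two_pi_mul_div hk
  rw [hrange, sum_insert (by simp)] at this
  simpa [eq_neg_iff_add_eq_zero, add_comm] using this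

theorem sin_pi_mul_div_ne_zero {M n : ℕ} (hn0 : 0 < n) (hnM : n < M) :
    sin (π * n / M) ≠ 0 := by
  have hM : (0 : ℝ) < M := by exact_mod_cast hn0.trans hnM
  refine (sin_pos_of_pos_of_lt_pi (by positivity) ?_).ne'
  rw [div_lt_iff₀ hM]
  exact mul_lt_mul_of_pos_left (by exact_mod_cast hnM) pi_pos

theorem sum_range_sub_one_sub_two_mul (m : ℕ) (x : ℝ) :
    ∑ j ∈ range m, (x - 1 - 2 * j) = m * (x - m) := by
  induction m with
  | zero => simp
  | succ m ih => rw [sum_range_succ, ih]; push_cast; ring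

theorem sum_range_mul_sub (N : ℕ) (x : ℝ) :
    ∑ m ∈ range N, (m : ℝ) * (x - m) = N * (N - 1) * (3 * x - 2 * N + 1) / 6 := by
  induction N with
  | zero => simp
  | succ N ih => rw [sum_range_succ, ih]; push_cast; ring

theorem sum_Icc_sin_two_mul_add_one_mul_div_sin {M j : ℕ} (hj : j < M) :
    ∑ n ∈ Icc 1 (M - 1), sin ((2 * j + 1) * (π * n / M)) / sin (π * n / M)
      = M - 1 - 2 * j := by
  have hterm : ∀ n ∈ Icc 1 (M - 1), sin ((2 * j + 1) * (π * n / M)) / sin (π * n / M)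
      = 1 + 2 * ∑ k ∈ range j, cos (2 * π * (k + 1 : ℕ) * n / M) := by
    intro n hn
    rw [mem_Icc] at hn
    rw [sin_two_mul_add_one_mul,
      mul_div_cancel_left₀ _ (sin_pi_mul_div_ne_zero (by omega) (by omega))]
    refine congrArg (1 + 2 * ·) (sum_congr rfl fun k _ => ?_)
    push_cast
    ring_nf
  have hcos : ∀ k ∈ range j, ∑ n ∈ Icc 1 (M - 1), cos (2 * π * (k + 1 : ℕ) * n / M) = -1 := by
    intro k hk
    rw [mem_range] at hk
    exact sum_Icc_cos_two_pi_mul_div (by omega) (Nat.not_dvd_of_pos_of_lt (by omega) (by omega))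
  rw [sum_congr rfl hterm, sum_add_distrib, ← mul_sum, sum_comm, sum_congr rfl hcos]
  simp only [sum_const, Nat.card_Icc, card_range, nsmul_eq_mul]
  push_cast [Nat.cast_sub (show 1 ≤ M by omega)]
  ring

theorem sum_Icc_sin_mul_sq_div_sin_sq {M m : ℕ} (hm : m ≤ M) :
    ∑ n ∈ Icc 1 (M - 1), sin (m * (π * n / M)) ^ 2 / sin (π * n / M) ^ 2 = m * (M - m) := by
  have hterm : ∀ n ∈ Icc 1 (M - 1), sin (m * (π * n / M)) ^ 2 / sin (π * n / M) ^ 2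
      = ∑ j ∈ range m, sin ((2 * j + 1) * (π * n / M)) / sin (π * n / M) := by
    intro n hn
    rw [mem_Icc] at hn
    rw [sin_mul_sq_eq_sin_mul_sum_sin, sq,
      mul_div_mul_left _ _ (sin_pi_mul_div_ne_zero (by omega) (by omega)), sum_div]
  have hj : ∀ j ∈ range m, ∑ n ∈ Icc 1 (M - 1), sin ((2 * j + 1) * (π * n / M)) / sin (π * n / M)
      = M - 1 - 2 * j := fun j hj =>
    sum_Icc_sin_two_mul_add_one_mul_div_sin ((mem_range.mp hj).trans_le hm)
  rw [sum_congr rfl hterm, sum_comm, sum_congr rfl hj, sum_range_sub_one_sub_two_mul]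

theorem sum_Icc_cos_div_sin_sq {M m : ℕ} (hm : m ≤ M) :
    ∑ n ∈ Icc 1 (M - 1), cos (2 * π * m * n / M) / sin (π * n / M) ^ 2
      = ∑ n ∈ Icc 1 (M - 1), 1 / sin (π * n / M) ^ 2 - 2 * m * (M - m) := by
  have hterm : ∀ n ∈ Icc 1 (M - 1), cos (2 * π * m * n / M) / sin (π * n / M) ^ 2
      = 1 / sin (π * n / M) ^ 2 - 2 * (sin (m * (π * n / M)) ^ 2 / sin (π * n / M) ^ 2) := by
    intro n _
    rw [show 2 * π * m * n / M = 2 * (m * (π * n / M)) by ring, cos_two_mul_eq_one_sub]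
    ring
  rw [sum_congr rfl hterm, sum_sub_distrib, ← mul_sum, sum_Icc_sin_mul_sq_div_sin_sq hm]
  ring

theorem sum_Icc_one_div_sin_sq {M : ℕ} (hM : M ≠ 0) :
    ∑ n ∈ Icc 1 (M - 1), 1 / sin (π * n / M) ^ 2 = ((M : ℝ) ^ 2 - 1) / 3 := by
  have hcos : ∀ n ∈ Icc 1 (M - 1), ∑ m ∈ range M, cos (2 * π * m * n / M) = 0 := by
    intro n hn
    rw [mem_Icc] at hn
    calc ∑ m ∈ range M, cos (2 * π * m * n / M) = ∑ m ∈ range M, cos (2 * π * n * m / M) :=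
          sum_congr rfl fun m _ => by ring_nf
      _ = 0 := sum_range_cos_two_pi_mul_div (Nat.not_dvd_of_pos_of_lt (by omega) (by omega))
  have hzero : ∑ m ∈ range M, ∑ n ∈ Icc 1 (M - 1),
      cos (2 * π * m * n / M) / sin (π * n / M) ^ 2 = 0 := by
    rw [sum_comm]
    exact sum_eq_zero fun n hn => by rw [← sum_div, hcos n hn, zero_div]
  rw [sum_congr rfl fun m hm => sum_Icc_cos_div_sin_sq (mem_range.mp hm).le, sum_sub_distrib,
    sum_const, card_range, nsmul_eq_mul] at hzero
  simp_rw [mul_assoc, ← mul_sum, sum_range_mul_sub] at hzero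
  have hM' : (M : ℝ) ≠ 0 := by exact_mod_cast hM
  apply mul_left_cancel₀ hM'
  linear_combination hzero

theorem stmt_6_general (M : ℕ) (m : ℕ) (hm : m < M) :
    (1 : ℝ) / 2 - (m : ℝ) / M + (m : ℝ) ^ 2 / (M : ℝ) ^ 2 =
      1 / 3 + 1 / (6 * (M : ℝ) ^ 2) +
        (1 / (2 * (M : ℝ) ^ 2)) *
          ∑ n ∈ Finset.Icc 1 (M - 1),
            Real.cos (2 * Real.pi * m * n / M) / (Real.sin (Real.pi * n / M)) ^ 2 := by
  have hM : M ≠ 0 := by omega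
  rw [sum_Icc_cos_div_sin_sq hm.le, sum_Icc_one_div_sin_sq hM]
  field_simp
  ring

theorem stmt_6 (M : ℕ) (hM : 2 ≤ M) (m : ℕ) (hm : m < M) :
    (1 : ℝ) / 2 - (m : ℝ) / M + (m : ℝ) ^ 2 / (M : ℝ) ^ 2 =
      1 / 3 + 1 / (6 * (M : ℝ) ^ 2) +
        (1 / (2 * (M : ℝ) ^ 2)) *
          ∑ n ∈ Finset.Icc 1 (M - 1),
            Real.cos (2 * Real.pi * m * n / M) / (Real.sin (Real.pi * n / M)) ^ 2 :=
  stmt_6_general M m hm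
end

section
/- Let η(s) = 1/2 - s + s², let G = (1/M){0,...,M-1}^d be the discretized torus, and for w : G → ℝ define the periodic energy E_p(w) = ∑_{x,y ∈ G} w(x)w(y)·∏_{k=1}^d η(|x_k - y_k|) and the extreme energy E_e(w) = -2(∑_{x∈G} w(x))·∑_{x∈G} w(x)∏_{k=1}^d x_k(1-x_k) + ∑_{x,y∈G} w(x)w(y)∏_{k=1}^d 2(min(x_k,y_k) - x_k y_k). Then for the constant weight w_r(x) = r/M, the excess E_p(w_r) - E_e(w_r) equals M^{d-2}·(((2M²+1)/(6M))^d + ((M²-1)/(6M))^d)·r². -/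
/-!
For the constant weight both energies factor over the coordinates into `d`-th powers of
one-dimensional grid sums: `∑∑ η(|m - n|/M) = (2M² + 1)/6`, `∑ (m/M)(1 - m/M) = (M² - 1)/(6M)`
and `∑∑ 2(min(m, n)/M - mn/M²) = (M² - 1)/6`. The last is `M` times the middle one, so the
extreme energy collapses to `-M^(d-2) ((M² - 1)/(6M))^d r²`. Each one-dimensional sum is a
polynomial in `m`, `n` and `min(m, n)` (via `|a - b| = a + b - 2 min(a, b)`), and
`∑∑ min(m, n) = ∑ m²`.
-/

open Finset

lemma abs_sub_eq_add_sub_two_nsmul_min {α : Type*} [AddCommGroup α] [LinearOrder α]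
    [IsOrderedAddMonoid α] (a b : α) : |a - b| = a + b - 2 • min a b := by
  rw [← max_sub_min_eq_abs', ← min_add_max a b, two_nsmul]
  abel

namespace Fintype

variable {ι α R : Type*} [Fintype ι] [DecidableEq ι] [Fintype α] [CommSemiring R]

lemma sum_prod_eq_pow_card (f : α → R) :
    ∑ x : ι → α, ∏ i, f (x i) = (∑ a, f a) ^ card ι := by
  rw [← card_univ, ← prod_const]
  exact (prod_sum fun _ => f).symm

lemma sum_sum_prod_eq_pow_card (f : α → α → R) :
    ∑ x : ι → α, ∑ y : ι → α, ∏ i, f (x i) (y i) = (∑ a, ∑ b, f a b) ^ card ι := by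
  simp_rw [← prod_sum]
  exact sum_prod_eq_pow_card fun a => ∑ b, f a b

end Fintype

namespace Fin

lemma sum_cast_val (M : ℕ) : ∑ m : Fin M, (m : ℝ) = M * (M - 1) / 2 := by
  induction M with
  | zero => simp
  | succ M ih => simp [sum_univ_castSucc, ih]; ring

lemma sum_cast_val_sq (M : ℕ) :
    ∑ m : Fin M, (m : ℝ) ^ 2 = M * (M - 1) * (2 * M - 1) / 6 := by
  induction M with
  | zero => simp
  | succ M ih => simp [sum_univ_castSucc, ih]; ring

lemma sum_sum_min_cast_val (M : ℕ) :
    ∑ m : Fin M, ∑ n : Fin M, min (m : ℝ) n = ∑ m : Fin M, (m : ℝ) ^ 2 := by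
  induction M with
  | zero => simp
  | succ M ih =>
    have hle (m : Fin M) : (m : ℝ) ≤ M := by exact_mod_cast m.is_lt.le
    simp only [sum_univ_castSucc, val_castSucc, val_last, sum_add_distrib, ih,
      min_eq_left (hle _), min_eq_right (hle _), min_self, sum_cast_val]
    ring

lemma sum_sum_quadratic_add_min (M : ℕ) (a b c e f : ℝ) :
    ∑ m : Fin M, ∑ n : Fin M,
      (a + b * ((m : ℝ) + n) + c * ((m : ℝ) * n) + e * ((m : ℝ) ^ 2 + (n : ℝ) ^ 2)
        + f * min (m : ℝ) n)
      = a * M ^ 2 + b * (M ^ 2 * (M - 1)) + c * (M * (M - 1) / 2) ^ 2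
        + e * (M ^ 2 * (M - 1) * (2 * M - 1) / 3) + f * (M * (M - 1) * (2 * M - 1) / 6) := by
  simp only [sum_add_distrib, mul_add, ← mul_sum, ← sum_mul, sum_const, nsmul_eq_mul,
    sum_sum_min_cast_val, sum_cast_val, sum_cast_val_sq]
  ring

variable {M : ℕ}

lemma sum_sum_half_sub_abs_add_sq (hM : 0 < M) :
    ∑ m : Fin M, ∑ n : Fin M,
      ((1 : ℝ) / 2 - |(m : ℝ) / M - (n : ℝ) / M| + |(m : ℝ) / M - (n : ℝ) / M| ^ 2)
      = (2 * (M : ℝ) ^ 2 + 1) / 6 := by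
  have hM' : (M : ℝ) ≠ 0 := by positivity
  have hpoly (m n : Fin M) : (1 : ℝ) / 2 - |(m : ℝ) / M - (n : ℝ) / M|
      + |(m : ℝ) / M - (n : ℝ) / M| ^ 2 = 1 / 2 + (-1 / M) * ((m : ℝ) + n)
        + (-2 / M ^ 2) * ((m : ℝ) * n) + 1 / M ^ 2 * ((m : ℝ) ^ 2 + (n : ℝ) ^ 2)
        + 2 / M * min (m : ℝ) n := by
    rw [sq_abs, ← sub_div, abs_div, abs_sub_eq_add_sub_two_nsmul_min, Nat.abs_cast]
    field_simp
    ring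
  simp only [hpoly, sum_sum_quadratic_add_min]
  field_simp
  ring

lemma sum_sum_two_mul_min_sub_mul (hM : 0 < M) :
    ∑ m : Fin M, ∑ n : Fin M,
      2 * (min ((m : ℝ) / M) ((n : ℝ) / M) - (m : ℝ) / M * ((n : ℝ) / M))
      = ((M : ℝ) ^ 2 - 1) / 6 := by
  have hM' : (M : ℝ) ≠ 0 := by positivity
  have hpoly (m n : Fin M) :
      2 * (min ((m : ℝ) / M) ((n : ℝ) / M) - (m : ℝ) / M * ((n : ℝ) / M))
      = 0 + 0 * ((m : ℝ) + n) + (-2 / M ^ 2) * ((m : ℝ) * n)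
        + 0 * ((m : ℝ) ^ 2 + (n : ℝ) ^ 2) + 2 / M * min (m : ℝ) n := by
    rw [min_div_div_right (Nat.cast_nonneg M)]
    field_simp
    ring
  simp only [hpoly, sum_sum_quadratic_add_min]
  field_simp
  ring

lemma sum_mul_one_sub (hM : 0 < M) :
    ∑ m : Fin M, (m : ℝ) / M * (1 - (m : ℝ) / M) = ((M : ℝ) ^ 2 - 1) / (6 * M) := by
  have hM' : (M : ℝ) ≠ 0 := by positivity
  have hpoly (m : Fin M) :
      (m : ℝ) / M * (1 - (m : ℝ) / M) = 1 / M * m - 1 / M ^ 2 * (m : ℝ) ^ 2 := by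
    field_simp
  simp only [hpoly, sum_sub_distrib, ← mul_sum, sum_cast_val, sum_cast_val_sq]
  field_simp
  ring

end Fin

theorem stmt_7 (M d : ℕ) (hM : 0 < M) (hd : 2 ≤ d) (r : ℝ) :
    (∑ x : Fin d → Fin M, ∑ y : Fin d → Fin M,
        (r / M) * (r / M) *
          ∏ k : Fin d,
            ((1 : ℝ) / 2 - |(x k : ℝ) / M - (y k : ℝ) / M| +
              |(x k : ℝ) / M - (y k : ℝ) / M| ^ 2)) -
      (-2 * (∑ _x : Fin d → Fin M, (r / M)) *
          (∑ x : Fin d → Fin M,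
            (r / M) * ∏ k : Fin d, ((x k : ℝ) / M * (1 - (x k : ℝ) / M))) +
        ∑ x : Fin d → Fin M, ∑ y : Fin d → Fin M,
          (r / M) * (r / M) *
            ∏ k : Fin d,
              2 * (min ((x k : ℝ) / M) ((y k : ℝ) / M) -
                (x k : ℝ) / M * ((y k : ℝ) / M))) =
      (M : ℝ) ^ (d - 2) *
        (((2 * (M : ℝ) ^ 2 + 1) / (6 * M)) ^ d + (((M : ℝ) ^ 2 - 1) / (6 * M)) ^ d) *
        r ^ 2 := by
  simp only [← mul_sum]
  rw [Fintype.sum_sum_prod_eq_pow_card fun a b : Fin M =>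
      (1 : ℝ) / 2 - |(a : ℝ) / M - (b : ℝ) / M| + |(a : ℝ) / M - (b : ℝ) / M| ^ 2,
    Fintype.sum_sum_prod_eq_pow_card fun a b : Fin M =>
      2 * (min ((a : ℝ) / M) ((b : ℝ) / M) - (a : ℝ) / M * ((b : ℝ) / M)),
    Fintype.sum_prod_eq_pow_card fun a : Fin M => (a : ℝ) / M * (1 - (a : ℝ) / M),
    Fin.sum_sum_half_sub_abs_add_sq hM, Fin.sum_sum_two_mul_min_sub_mul hM, Fin.sum_mul_one_sub hM,
    sum_const, card_univ, Fintype.card_fun, Fintype.card_fin, Fintype.card_fin, nsmul_eq_mul]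
  obtain ⟨e, rfl⟩ := Nat.exists_eq_add_of_le' hd
  have hM' : (M : ℝ) ≠ 0 := by positivity
  simp only [div_mul_eq_div_div, div_pow, pow_add, Nat.add_sub_cancel]
  push_cast
  field_simp
  ring
end

section
/- Let σ be a permutation of {0,1,...,N-1} and X(σ) = {(m/N, σ(m)/N) : m = 0,...,N-1} ⊆ [0,1)². Then L₂-periodic(X(σ))² − 4·L₂-extreme(X(σ))² = (N²+1)/(18N²), where L₂-periodic(X)² = −N²/9 + ∑_{x,y∈X} ∏_{k=1}^2 (1/2 − |x_k−y_k| + |x_k−y_k|²) and L₂-extreme(X)² = N²/144 − (N/2)·∑_{x∈X} ∏_{k=1}^2 x_k(1−x_k) + ∑_{x,y∈X} ∏_{k=1}^2 (min(x_k,y_k) − x_k y_k). -/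
/-!
The periodic kernel splits as `1/2 - |a - b| + |a - b|^2 = 2 (min a b - a b) + c a + c b` with
`c a = (a - 1/2)^2 = 1/4 - a (1 - a)`. Expanding the periodic double sum accordingly, its
`(min - product)²` part is exactly four times the one in the extreme discrepancy, and the cross terms
only involve the row sums `∑ₙ (min (xₘ, xₙ) - xₘ xₙ)`. When each coordinate runs through the grid
`{0, 1/N, …, (N-1)/N}` these row sums are `(N/2) xₘ (1 - xₘ)`, and then every term depending on how
the two coordinates are paired cancels, leaving `-N²/72 + 2 (∑ c xᵢ) (∑ c yᵢ)`; on the grid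
`∑ c = (N² + 2) / (12 N)`.
-/

open Finset

theorem half_sub_abs_sub_add_sq_eq (a b : ℝ) :
    1 / 2 - |a - b| + |a - b| ^ 2 = 2 * (min a b - a * b) + (a - 1 / 2) ^ 2 + (b - 1 / 2) ^ 2 := by
  rcases le_total a b with h | h
  · rw [abs_of_nonpos (sub_nonpos.2 h), min_eq_left h]; ring
  · rw [abs_of_nonneg (sub_nonneg.2 h), min_eq_right h]; ring

section

variable {ι R : Type*} [Fintype ι] [CommSemiring R]

theorem sum_sum_mul_add_of_symm (k : ι → ι → R) (hk : ∀ m n, k m n = k n m) (d : ι → R) :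
    ∑ m, ∑ n, k m n * (d m + d n) = 2 * ∑ m, (∑ n, k m n) * d m := by
  simp only [mul_add, sum_add_distrib, sum_mul]
  rw [sum_comm (f := fun m n => k m n * d n)]
  simp only [hk _ (_ : ι)]
  ring

theorem sum_sum_add_mul_add (c d : ι → R) :
    ∑ m, ∑ n, (c m + c n) * (d m + d n) =
      2 * Fintype.card ι * ∑ i, c i * d i + 2 * (∑ i, c i) * ∑ i, d i := by
  have hrow : ∀ m, ∑ n, (c m + c n) = Fintype.card ι * c m + ∑ i, c i := fun m => by
    simp [sum_add_distrib]
  rw [sum_sum_mul_add_of_symm _ (fun m n => add_comm (c m) (c n))]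
  simp only [hrow, add_mul, sum_add_distrib, mul_assoc, ← mul_sum]
  ring

theorem periodic_sub_four_mul_extreme_eq_of_row_sums (x y : ι → ℝ)
    (hx : ∀ m, ∑ n, (min (x m) (x n) - x m * x n) = Fintype.card ι / 2 * (x m * (1 - x m)))
    (hy : ∀ m, ∑ n, (min (y m) (y n) - y m * y n) = Fintype.card ι / 2 * (y m * (1 - y m))) :
    (-(Fintype.card ι : ℝ) ^ 2 / 9 +
        ∑ m, ∑ n, (1 / 2 - |x m - x n| + |x m - x n| ^ 2) * (1 / 2 - |y m - y n| + |y m - y n| ^ 2)) -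
      4 * ((Fintype.card ι : ℝ) ^ 2 / 144 -
          (Fintype.card ι / 2) * ∑ m, (x m * (1 - x m)) * (y m * (1 - y m)) +
          ∑ m, ∑ n, (min (x m) (x n) - x m * x n) * (min (y m) (y n) - y m * y n)) =
      -(Fintype.card ι : ℝ) ^ 2 / 72 + 2 * (∑ i, (x i - 1 / 2) ^ 2) * ∑ i, (y i - 1 / 2) ^ 2 := by
  set c := fun i => (x i - 1 / 2) ^ 2
  set d := fun i => (y i - 1 / 2) ^ 2
  have hP : ∑ m, ∑ n, (1 / 2 - |x m - x n| + |x m - x n| ^ 2) * (1 / 2 - |y m - y n| + |y m - y n| ^ 2)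
      = 4 * ∑ m, ∑ n, (min (x m) (x n) - x m * x n) * (min (y m) (y n) - y m * y n)
        + 2 * ∑ m, ∑ n, (min (x m) (x n) - x m * x n) * (d m + d n)
        + 2 * ∑ m, ∑ n, (min (y m) (y n) - y m * y n) * (c m + c n)
        + ∑ m, ∑ n, (c m + c n) * (d m + d n) := by
    simp only [half_sub_abs_sub_add_sq_eq, mul_sum, ← sum_add_distrib]
    exact sum_congr rfl fun m _ => sum_congr rfl fun n _ => by ring
  rw [hP, sum_sum_add_mul_add, sum_sum_mul_add_of_symm _ (fun m n => by rw [min_comm]; ring),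
    sum_sum_mul_add_of_symm _ (fun m n => by rw [min_comm]; ring)]
  have hwx : ∀ i, x i * (1 - x i) = 1 / 4 - c i := fun i => by ring
  have hwy : ∀ i, y i * (1 - y i) = 1 / 4 - d i := fun i => by ring
  simp only [hx, hy, hwx, hwy, mul_sub, sub_mul, mul_assoc, sum_sub_distrib, ← mul_sum, ← sum_mul,
    sum_const, card_univ, nsmul_eq_mul, mul_comm (d _) (c _)]
  ring

end

theorem sum_range_cast_id (n : ℕ) : ∑ i ∈ range n, (i : ℝ) = n * (n - 1) / 2 := by
  induction n with
  | zero => simp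
  | succ n ih => rw [sum_range_succ, ih]; push_cast; ring

theorem sum_range_cast_sq (n : ℕ) : ∑ i ∈ range n, (i : ℝ) ^ 2 = n * (n - 1) * (2 * n - 1) / 6 := by
  induction n with
  | zero => simp
  | succ n ih => rw [sum_range_succ, ih]; push_cast; ring

theorem sum_range_min_cast {m N : ℕ} (h : m ≤ N) :
    ∑ n ∈ range N, min (m : ℝ) n = m * (m - 1) / 2 + m * (N - m) := by
  induction N, h using Nat.le_induction with
  | base =>
    rw [sum_congr rfl fun n hn => min_eq_right (Nat.cast_le.2 (mem_range.1 hn).le),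
      sum_range_cast_id]
    ring
  | succ N hmN ih =>
    rw [sum_range_succ, ih, min_eq_left (Nat.cast_le.2 hmN)]
    push_cast; ring

theorem sum_min_div_sub_mul_div {N : ℕ} (m : Fin N) :
    ∑ n : Fin N, (min ((m : ℝ) / N) ((n : ℝ) / N) - (m : ℝ) / N * ((n : ℝ) / N)) =
      N / 2 * ((m : ℝ) / N * (1 - (m : ℝ) / N)) := by
  have hN : (N : ℝ) ≠ 0 := Nat.cast_ne_zero.2 m.pos.ne'
  rw [Fin.sum_univ_eq_sum_range (fun n => min ((m : ℝ) / N) ((n : ℝ) / N) - (m : ℝ) / N * (n / N))]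
  simp only [min_div_div_right (Nat.cast_nonneg N), sum_sub_distrib, ← sum_div, ← mul_sum,
    sum_range_min_cast m.is_le', sum_range_cast_id]
  field_simp
  ring

theorem sum_div_sub_half_sq {N : ℕ} (hN : N ≠ 0) :
    ∑ i : Fin N, ((i : ℝ) / N - 1 / 2) ^ 2 = ((N : ℝ) ^ 2 + 2) / (12 * N) := by
  have hN' : (N : ℝ) ≠ 0 := Nat.cast_ne_zero.2 hN
  rw [Fin.sum_univ_eq_sum_range (fun i => ((i : ℝ) / N - 1 / 2) ^ 2)]
  simp only [sub_sq, div_pow, sum_add_distrib, sum_sub_distrib, ← sum_div, ← mul_sum, ← sum_mul,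
    sum_range_cast_sq, sum_range_cast_id, sum_const, card_range, nsmul_eq_mul]
  field_simp
  ring

theorem stmt_9 (N : ℕ) (hN : 0 < N) (σ : Equiv.Perm (Fin N)) :
    (-(N : ℝ) ^ 2 / 9 +
        ∑ m : Fin N, ∑ n : Fin N,
          ((1 : ℝ) / 2 - |(m : ℝ) / N - (n : ℝ) / N| + |(m : ℝ) / N - (n : ℝ) / N| ^ 2) *
            ((1 : ℝ) / 2 - |(σ m : ℝ) / N - (σ n : ℝ) / N| +
              |(σ m : ℝ) / N - (σ n : ℝ) / N| ^ 2)) -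
      4 * ((N : ℝ) ^ 2 / 144 -
          ((N : ℝ) / 2) *
            ∑ m : Fin N,
              ((m : ℝ) / N * (1 - (m : ℝ) / N)) * ((σ m : ℝ) / N * (1 - (σ m : ℝ) / N)) +
          ∑ m : Fin N, ∑ n : Fin N,
            (min ((m : ℝ) / N) ((n : ℝ) / N) - (m : ℝ) / N * ((n : ℝ) / N)) *
              (min ((σ m : ℝ) / N) ((σ n : ℝ) / N) - (σ m : ℝ) / N * ((σ n : ℝ) / N))) =
      ((N : ℝ) ^ 2 + 1) / (18 * (N : ℝ) ^ 2) := by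
  have hσ : ∀ m : Fin N, ∑ n : Fin N,
      (min ((σ m : ℝ) / N) ((σ n : ℝ) / N) - (σ m : ℝ) / N * ((σ n : ℝ) / N)) =
        N / 2 * ((σ m : ℝ) / N * (1 - (σ m : ℝ) / N)) := fun m => by
    rw [Equiv.sum_comp σ (fun n => min ((σ m : ℝ) / N) ((n : ℝ) / N) - (σ m : ℝ) / N * (n / N))]
    exact sum_min_div_sub_mul_div (σ m)
  have key := periodic_sub_four_mul_extreme_eq_of_row_sums (fun m : Fin N => (m : ℝ) / N)
    (fun m => (σ m : ℝ) / N) (by simpa using sum_min_div_sub_mul_div) (by simpa using hσ)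
  rw [Fintype.card_fin] at key
  rw [key, Equiv.sum_comp σ (fun i => ((i : ℝ) / N - 1 / 2) ^ 2), sum_div_sub_half_sq hN.ne']
  field_simp
  ring
end

section
/- Let H ⊆ {0,...,M-1}^d be a weak M-Latin hypercube (for each k ∈ {1,...,d} and each choice of the other d-1 coordinates there is exactly one value of the k-th coordinate yielding a point of H), and let X = (1/M)H ⊆ [0,1)^d. Then L₂-periodic(X)² − 2^d·L₂-extreme(X)² = ((2M²+1)^d + (M²−1)^d − (1+2^d)·M^{2d}) / (6^d·M²), where the two discrepancies are given by their Warnock-type formulas with N = #X = M^{d-1}. -/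
open Finset


/-- `H` is a weak `M`-Latin hypercube: every axis-parallel row of the grid
`(Fin d → Fin M)` contains exactly one point of `H`. -/
def IsWeakLatinHypercube {d M : ℕ} (H : Finset (Fin d → Fin M)) : Prop :=
  ∀ (k : Fin d) (x : Fin d → Fin M), ∃! v : Fin M, Function.update x k v ∈ H


noncomputable def bet (M : ℕ) (a : Fin M) : ℝ := (a : ℝ)/M * (1 - (a : ℝ)/M)
noncomputable def Gf (M : ℕ) (a b : Fin M) : ℝ :=
  -|(a : ℝ)/M - (b : ℝ)/M| + ((a : ℝ)/M - (b : ℝ)/M)^2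

lemma sum_id' (n : ℕ) : ∑ i ∈ range n, (i : ℝ) = n*(n-1)/2 := by
  induction n with
  | zero => simp
  | succ m ih => rw [Finset.sum_range_succ, ih]; push_cast; ring

lemma sum_sq' (n : ℕ) : ∑ i ∈ range n, (i : ℝ)^2 = n*(n-1)*(2*n-1)/6 := by
  induction n with
  | zero => simp
  | succ m ih => rw [Finset.sum_range_succ, ih]; push_cast; ring

lemma sum_bet (M : ℕ) (hM : 1 ≤ M) : ∑ a : Fin M, bet M a = ((M:ℝ)^2 - 1)/(6*M) := by
  have hM0 : (M:ℝ) ≠ 0 := by positivity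
  have : ∑ a : Fin M, bet M a = ∑ i ∈ range M, ((i:ℝ)/M * (1 - (i:ℝ)/M)) := by
    rw [Finset.sum_range fun i => ((i:ℝ)/M * (1 - (i:ℝ)/M))]
    apply Finset.sum_congr rfl; intro a _; rfl
  rw [this]
  have expand : ∀ i ∈ range M, ((i:ℝ)/M * (1 - (i:ℝ)/M)) = (i:ℝ)/M - (i:ℝ)^2/M^2 := by
    intro i _; field_simp
  rw [Finset.sum_congr rfl expand, Finset.sum_sub_distrib]
  rw [← Finset.sum_div, ← Finset.sum_div, sum_id', sum_sq']
  have hM1 : (1:ℝ) ≤ M := by exact_mod_cast hM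
  field_simp
  ring

lemma Gf_eq (M : ℕ) (a b : Fin M) : Gf M a b = - bet M (a - b) := by
  have hM : 0 < M := a.pos
  have hMR : (0:ℝ) < M := by exact_mod_cast hM
  have hsub : ((a - b : Fin M) : ℕ) = (M - b.val + a.val) % M := by
    rw [Fin.sub_def]
  rcases le_or_gt (b.val) (a.val) with h | h
  · have hc : ((a - b : Fin M) : ℕ) = a.val - b.val := by
      rw [hsub]
      have : M - b.val + a.val = (a.val - b.val) + M := by omega
      rw [this, Nat.add_mod_right, Nat.mod_eq_of_lt (by omega)]
    have habs : |(a : ℝ)/M - (b : ℝ)/M| = (a:ℝ)/M - (b:ℝ)/M := by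
      rw [abs_of_nonneg]
      apply sub_nonneg.mpr
      apply div_le_div_of_nonneg_right ?_ hMR.le |>.trans_eq rfl
      exact_mod_cast h
    have hcR : (((a - b : Fin M) : ℕ) : ℝ) = (a:ℝ) - (b:ℝ) := by
      rw [hc]; push_cast [Nat.cast_sub h]; ring
    unfold Gf bet
    rw [habs]
    rw [show (((a - b : Fin M)) : ℝ) = (((a - b : Fin M) : ℕ) : ℝ) from rfl, hcR]
    ring
  · have hc : ((a - b : Fin M) : ℕ) = M - b.val + a.val := by
      rw [hsub, Nat.mod_eq_of_lt (by omega)]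
    have habs : |(a : ℝ)/M - (b : ℝ)/M| = (b:ℝ)/M - (a:ℝ)/M := by
      rw [abs_of_nonpos, neg_sub]
      apply sub_nonpos.mpr
      apply div_le_div_of_nonneg_right ?_ hMR.le |>.trans_eq rfl
      exact_mod_cast h.le
    have hcR : (((a - b : Fin M) : ℕ) : ℝ) = (M:ℝ) - (b:ℝ) + (a:ℝ) := by
      rw [hc]; push_cast [Nat.cast_sub (le_of_lt b.isLt)]; ring
    unfold Gf bet
    rw [habs]
    rw [show (((a - b : Fin M)) : ℝ) = (((a - b : Fin M) : ℕ) : ℝ) from rfl, hcR]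
    field_simp
    ring

lemma Gf_symm (M : ℕ) (a b : Fin M) : Gf M a b = Gf M b a := by
  unfold Gf; rw [abs_sub_comm]; ring

lemma rowsum (M : ℕ) (hM : 1 ≤ M) (a : Fin M) :
    ∑ b : Fin M, Gf M a b = -(((M:ℝ)^2 - 1)/(6*M)) := by
  haveI : NeZero M := ⟨by omega⟩
  have h1 : ∑ b : Fin M, Gf M a b = ∑ b : Fin M, - bet M (a - b) :=
    Finset.sum_congr rfl fun b _ => Gf_eq M a b
  rw [h1, Finset.sum_neg_distrib]
  congr 1
  have h2 := Fintype.sum_bijective (fun b : Fin M => a - b)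
    (Function.Involutive.bijective (fun b => by simp [sub_sub_cancel]))
    (fun b => bet M (a - b)) (fun r => bet M r) (fun b => rfl)
  rw [h2, sum_bet M hM]

lemma rowsum' (M : ℕ) (hM : 1 ≤ M) (b : Fin M) :
    ∑ a : Fin M, Gf M a b = -(((M:ℝ)^2 - 1)/(6*M)) := by
  rw [Finset.sum_congr rfl fun a _ => Gf_symm M a b, rowsum M hM b]

lemma sum1 {M d : ℕ} (hM : 1 ≤ M) {H : Finset (Fin d → Fin M)}
    (hH : IsWeakLatinHypercube H)
    (φ : Fin d → Fin M → ℝ) (k₀ : Fin d) (hc : ∀ u v : Fin M, φ k₀ u = φ k₀ v) :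
    ∑ y ∈ H, ∏ k, φ k (y k) = (∏ k, ∑ a : Fin M, φ k a) / M := by
  have hMR : (M:ℝ) ≠ 0 := by positivity
  set F : (Fin d → Fin M) → ℝ :=
    fun z => (if z ∈ H then (1:ℝ) else 0) * ∏ k, φ k (z k) with hF
  have key : ∀ y : Fin d → Fin M,
      ∑ v : Fin M, (if Function.update y k₀ v ∈ H then (1:ℝ) else 0) = 1 := by
    intro y
    obtain ⟨v₀, h0, h1⟩ := hH k₀ y
    have : ∀ v : Fin M, (if Function.update y k₀ v ∈ H then (1:ℝ) else 0)
        = if v = v₀ then (1:ℝ) else 0 := by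
      intro v
      by_cases h : Function.update y k₀ v ∈ H
      · rw [if_pos h, if_pos (h1 v h)]
      · rw [if_neg h, if_neg (fun hv => h (by rw [hv]; exact h0))]
    rw [Finset.sum_congr rfl fun v _ => this v, Finset.sum_ite_eq' univ v₀]
    simp
  have inv : ∀ (y : Fin d → Fin M) (v : Fin M),
      ∏ k, φ k (Function.update y k₀ v k) = ∏ k, φ k (y k) := by
    intro y v
    apply Finset.prod_congr rfl
    intro k _
    rcases eq_or_ne k k₀ with rfl | h
    · rw [Function.update_self]; exact hc v (y k)
    · rw [Function.update_of_ne h]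
  have e_bij : Function.Bijective
      (fun p : (Fin d → Fin M) × Fin M => (Function.update p.1 k₀ p.2, p.1 k₀)) := by
    apply Function.Involutive.bijective
    intro ⟨y, v⟩
    simp [Function.update_idem, Function.update_self, Function.update_eq_self]
  have main : ∏ k, ∑ a : Fin M, φ k a = (M:ℝ) * ∑ y ∈ H, ∏ k, φ k (y k) := by
    calc ∏ k, ∑ a : Fin M, φ k a
        = ∑ y ∈ Fintype.piFinset (fun _ : Fin d => (univ : Finset (Fin M))),
            ∏ k, φ k (y k) := Finset.prod_univ_sum _ _
      _ = ∑ y : Fin d → Fin M, ∏ k, φ k (y k) := by rw [Fintype.piFinset_univ]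
      _ = ∑ y : Fin d → Fin M, (∏ k, φ k (y k)) *
            ∑ v : Fin M, (if Function.update y k₀ v ∈ H then (1:ℝ) else 0) := by
          apply Finset.sum_congr rfl; intro y _; rw [key y, mul_one]
      _ = ∑ y : Fin d → Fin M, ∑ v : Fin M, F (Function.update y k₀ v) := by
          apply Finset.sum_congr rfl; intro y _
          rw [Finset.mul_sum]
          apply Finset.sum_congr rfl; intro v _
          rw [hF]; dsimp only; rw [inv y v]; ring
      _ = ∑ p : (Fin d → Fin M) × Fin M, F (Function.update p.1 k₀ p.2) := by
          rw [Fintype.sum_prod_type]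
      _ = ∑ p : (Fin d → Fin M) × Fin M, F p.1 :=
          Fintype.sum_bijective _ e_bij _ _ (fun p => rfl)
      _ = ∑ z : Fin d → Fin M, ∑ _v : Fin M, F z := by rw [Fintype.sum_prod_type]
      _ = (M:ℝ) * ∑ z : Fin d → Fin M, F z := by
          simp [Finset.sum_const, Finset.card_univ, nsmul_eq_mul, Finset.mul_sum]
      _ = (M:ℝ) * ∑ y ∈ H, ∏ k, φ k (y k) := by
          congr 1
          rw [hF]
          simp [ite_mul, Finset.sum_ite_mem]
  rw [eq_div_iff hMR, mul_comm, ← main]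

lemma fin3cases (j : Fin 3) : j = 0 ∨ j = 1 ∨ j = 2 := by omega

lemma Tgen {M d : ℕ} (hM : 1 ≤ M) {H : Finset (Fin d → Fin M)}
    (hH : IsWeakLatinHypercube H)
    (f : Fin 3 → Fin M → Fin M → ℝ) (r0 : ℝ)
    (hf1 : ∀ a b b', f 1 a b = f 1 a b')
    (hf2 : ∀ a a' b, f 2 a b = f 2 a' b)
    (h0r : ∀ a, ∑ b : Fin M, f 0 a b = r0)
    (h0c : ∀ b, ∑ a : Fin M, f 0 a b = r0)
    (g : Fin d → Fin 3)
    (e0 : ∃ k, g k ≠ 0) (e1 : ∃ k, g k ≠ 1) (e2 : ∃ k, g k ≠ 2) :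
    ∑ x ∈ H, ∑ y ∈ H, ∏ k, f (g k) (x k) (y k)
      = (∏ k, (if g k = 0 then (M:ℝ)*r0
          else if g k = 1 then (∑ a : Fin M, ∑ b : Fin M, f 1 a b)
          else (∑ a : Fin M, ∑ b : Fin M, f 2 a b))) / (M:ℝ)^2 := by
  have hMR : (M:ℝ) ≠ 0 := by positivity
  by_cases hB : ∃ k₁, g k₁ = 1
  · obtain ⟨k₁, hk₁⟩ := hB
    obtain ⟨k₂, hk₂⟩ := e1
    have inner : ∀ x : Fin d → Fin M,
        ∑ y ∈ H, ∏ k, f (g k) (x k) (y k)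
          = (∏ k, ∑ b : Fin M, f (g k) (x k) b) / M := by
      intro x
      exact sum1 hM hH (fun k b => f (g k) (x k) b) k₁
        (by intro u v; show f (g k₁) (x k₁) u = f (g k₁) (x k₁) v
            rw [hk₁]; exact hf1 (x k₁) u v)
    rw [Finset.sum_congr rfl fun x _ => inner x, ← Finset.sum_div]
    have hconst : ∀ u v : Fin M,
        (∑ b : Fin M, f (g k₂) u b) = ∑ b : Fin M, f (g k₂) v b := by
      intro u v
      rcases fin3cases (g k₂) with h | h | h
      · rw [h, h0r, h0r]
      · exact absurd h hk₂
      · rw [h]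
        exact Finset.sum_congr rfl fun b _ => hf2 u v b
    rw [sum1 hM hH (fun k a => ∑ b : Fin M, f (g k) a b) k₂ hconst]
    rw [div_div, ← pow_two]
    congr 1
    apply Finset.prod_congr rfl
    intro k _
    rcases fin3cases (g k) with h | h | h
    · rw [h, if_pos rfl]
      rw [Finset.sum_congr rfl fun a _ => h0r a, Finset.sum_const, Finset.card_univ,
        Fintype.card_fin, nsmul_eq_mul]
    · rw [h, if_neg (by decide), if_pos rfl]
    · rw [h, if_neg (by decide), if_neg (by decide)]
  · push_neg at hB
    obtain ⟨kA, hkA⟩ : ∃ k, g k = 0 := by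
      obtain ⟨k, hk⟩ := e2
      refine ⟨k, ?_⟩
      have := fin3cases (g k); have := hB k; tauto
    obtain ⟨kC, hkC⟩ : ∃ k, g k = 2 := by
      obtain ⟨k, hk⟩ := e0
      refine ⟨k, ?_⟩
      have := fin3cases (g k); have := hB k; tauto
    rw [Finset.sum_comm]
    have inner : ∀ y : Fin d → Fin M,
        ∑ x ∈ H, ∏ k, f (g k) (x k) (y k)
          = (∏ k, ∑ a : Fin M, f (g k) a (y k)) / M := by
      intro y
      exact sum1 hM hH (fun k a => f (g k) a (y k)) kC
        (by intro u v; show f (g kC) u (y kC) = f (g kC) v (y kC)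
            rw [hkC]; exact hf2 u v (y kC))
    rw [Finset.sum_congr rfl fun y _ => inner y, ← Finset.sum_div]
    have hconst : ∀ u v : Fin M,
        (∑ a : Fin M, f (g kA) a u) = ∑ a : Fin M, f (g kA) a v := by
      intro u v
      show (∑ a : Fin M, f (g kA) a u) = ∑ a : Fin M, f (g kA) a v
      rw [hkA, h0c, h0c]
    rw [sum1 hM hH (fun k b => ∑ a : Fin M, f (g k) a b) kA hconst]
    rw [div_div, ← pow_two]
    congr 1
    apply Finset.prod_congr rfl
    intro k _
    rcases fin3cases (g k) with h | h | h
    · rw [h, if_pos rfl]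
      rw [Finset.sum_congr rfl fun b _ => h0c b, Finset.sum_const, Finset.card_univ,
        Fintype.card_fin, nsmul_eq_mul]
    · exact absurd h (hB k)
    · rw [h, if_neg (by decide), if_neg (by decide)]
      exact Finset.sum_comm.symm

noncomputable def fP (M : ℕ) : Fin 3 → Fin M → Fin M → ℝ :=
  fun j a b => if j = 0 then Gf M a b else 1/4
noncomputable def fF (M : ℕ) : Fin 3 → Fin M → Fin M → ℝ :=
  fun j a b => if j = 0 then Gf M a b else if j = 1 then bet M a else bet M b

lemma card_H {M d : ℕ} (hM : 1 ≤ M) (hd : 1 ≤ d) {H : Finset (Fin d → Fin M)}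
    (hH : IsWeakLatinHypercube H) : ((H.card : ℝ)) = (M:ℝ)^d / M := by
  have h := sum1 hM hH (fun _ _ => (1:ℝ)) ⟨0, by omega⟩ (fun _ _ => rfl)
  simpa [Finset.sum_const, Finset.card_univ, Fintype.card_fin, Finset.prod_const,
    nsmul_eq_mul] using h

lemma exists_ne_of_ne_const {d : ℕ} (g : Fin d → Fin 3) (j : Fin 3)
    (h : g ≠ fun _ => j) : ∃ k, g k ≠ j := by
  by_contra hc; push_neg at hc; exact h (funext hc)

lemma sumsum_quarter (M : ℕ) (hM : 1 ≤ M) :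
    (∑ a : Fin M, ∑ b : Fin M, (1/4 : ℝ)) = (M:ℝ)^2/4 := by
  simp [Finset.sum_const, Finset.card_univ, Fintype.card_fin, nsmul_eq_mul]
  ring

lemma sumsum_bet1 (M : ℕ) (hM : 1 ≤ M) :
    (∑ a : Fin M, ∑ b : Fin M, bet M a) = (M:ℝ) * (((M:ℝ)^2 - 1)/(6*M)) := by
  rw [← sum_bet M hM, Finset.sum_comm, Finset.sum_const, Finset.card_univ,
    Fintype.card_fin, nsmul_eq_mul]

lemma sumsum_bet2 (M : ℕ) (hM : 1 ≤ M) :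
    (∑ a : Fin M, ∑ b : Fin M, bet M b) = (M:ℝ) * (((M:ℝ)^2 - 1)/(6*M)) := by
  rw [Finset.sum_const, Finset.card_univ, Fintype.card_fin]
  rw [nsmul_eq_mul, sum_bet M hM]

lemma TP_eq {M d : ℕ} (hM : 1 ≤ M) (hd : 1 ≤ d) {H : Finset (Fin d → Fin M)}
    (hH : IsWeakLatinHypercube H) (g : Fin d → Fin 3) (hg0 : g ≠ fun _ => 0) :
    ∑ x ∈ H, ∑ y ∈ H, ∏ k, fP M (g k) (x k) (y k)
      = (∏ k, (if g k = 0 then (M:ℝ) * (-(((M:ℝ)^2 - 1)/(6*M))) else (M:ℝ)^2/4))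
          / (M:ℝ)^2 := by
  have hXR : (M:ℝ) ≠ 0 := by positivity
  by_cases h1 : ∃ k, g k ≠ 1
  · by_cases h2 : ∃ k, g k ≠ 2
    · have e0 := exists_ne_of_ne_const g 0 hg0
      have h := Tgen hM hH (fP M) (-(((M:ℝ)^2 - 1)/(6*M)))
        (fun a b b' => rfl) (fun a a' b => rfl)
        (fun a => by simpa [fP] using rowsum M hM a)
        (fun b => by simpa [fP] using rowsum' M hM b)
        g e0 h1 h2
      rw [h]
      congr 1
      apply Finset.prod_congr rfl
      intro k _
      rcases fin3cases (g k) with hk | hk | hk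
      · rw [hk]; simp
      · rw [hk]; simp [fP]; ring
      · rw [hk]; simp [fP]; ring
    · -- g = const 2
      push_neg at h2
      have hprod : ∀ x y : Fin d → Fin M,
          ∏ k, fP M (g k) (x k) (y k) = (1/4:ℝ)^d := by
        intro x y
        calc ∏ k, fP M (g k) (x k) (y k) = ∏ _k : Fin d, (1/4:ℝ) :=
              Finset.prod_congr rfl (fun k _ => by simp [h2 k, fP])
          _ = (1/4:ℝ)^d := by
              rw [Finset.prod_const, Finset.card_univ, Fintype.card_fin]
      have hval : ∏ k, (if g k = 0 then (M:ℝ) * (-(((M:ℝ)^2 - 1)/(6*M))) else (M:ℝ)^2/4)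
          = ((M:ℝ)^2/4)^d := by
        calc ∏ k, (if g k = 0 then (M:ℝ) * (-(((M:ℝ)^2 - 1)/(6*M))) else (M:ℝ)^2/4)
            = ∏ _k : Fin d, ((M:ℝ)^2/4) :=
              Finset.prod_congr rfl (fun k _ => by simp [h2 k])
          _ = ((M:ℝ)^2/4)^d := by
              rw [Finset.prod_const, Finset.card_univ, Fintype.card_fin]
      rw [hval]
      calc ∑ x ∈ H, ∑ y ∈ H, ∏ k, fP M (g k) (x k) (y k)
          = ∑ x ∈ H, ∑ y ∈ H, (1/4:ℝ)^d := by
            exact Finset.sum_congr rfl fun x _ => Finset.sum_congr rfl fun y _ => hprod x y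
        _ = (H.card : ℝ) * ((H.card : ℝ) * (1/4:ℝ)^d) := by
            simp [Finset.sum_const, nsmul_eq_mul]
        _ = ((M:ℝ)^2/4)^d / (M:ℝ)^2 := by
            have h4 : (4:ℝ)^d ≠ 0 := by positivity
            have hsw : ((M:ℝ)^2)^d = ((M:ℝ)^d)^2 := by
              rw [← pow_mul, ← pow_mul, Nat.mul_comm]
            rw [card_H hM hd hH, div_pow, div_pow, one_pow, hsw]
            field_simp
  · -- g = const 1 : same as const 2 case
    push_neg at h1
    have hprod : ∀ x y : Fin d → Fin M,
        ∏ k, fP M (g k) (x k) (y k) = (1/4:ℝ)^d := by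
      intro x y
      calc ∏ k, fP M (g k) (x k) (y k) = ∏ _k : Fin d, (1/4:ℝ) :=
            Finset.prod_congr rfl (fun k _ => by simp [h1 k, fP])
        _ = (1/4:ℝ)^d := by
            rw [Finset.prod_const, Finset.card_univ, Fintype.card_fin]
    have hval : ∏ k, (if g k = 0 then (M:ℝ) * (-(((M:ℝ)^2 - 1)/(6*M))) else (M:ℝ)^2/4)
        = ((M:ℝ)^2/4)^d := by
      calc ∏ k, (if g k = 0 then (M:ℝ) * (-(((M:ℝ)^2 - 1)/(6*M))) else (M:ℝ)^2/4)
          = ∏ _k : Fin d, ((M:ℝ)^2/4) :=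
            Finset.prod_congr rfl (fun k _ => by simp [h1 k])
        _ = ((M:ℝ)^2/4)^d := by
            rw [Finset.prod_const, Finset.card_univ, Fintype.card_fin]
    rw [hval]
    calc ∑ x ∈ H, ∑ y ∈ H, ∏ k, fP M (g k) (x k) (y k)
        = ∑ x ∈ H, ∑ y ∈ H, (1/4:ℝ)^d := by
          exact Finset.sum_congr rfl fun x _ => Finset.sum_congr rfl fun y _ => hprod x y
      _ = (H.card : ℝ) * ((H.card : ℝ) * (1/4:ℝ)^d) := by
          simp [Finset.sum_const, nsmul_eq_mul]
      _ = ((M:ℝ)^2/4)^d / (M:ℝ)^2 := by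
          have h4 : (4:ℝ)^d ≠ 0 := by positivity
          have hsw : ((M:ℝ)^2)^d = ((M:ℝ)^d)^2 := by
            rw [← pow_mul, ← pow_mul, Nat.mul_comm]
          rw [card_H hM hd hH, div_pow, div_pow, one_pow, hsw]
          field_simp

lemma final_arith (d : ℕ) (hd : 2 ≤ d) (X q b e0 : ℝ) (hX : X ≠ 0) :
    (-(X^(d-1))^2/3^d + (q + (2*X^2+1)^d/(2^d*3^d)/X^2 - e0/X^2))
      - 2^d*((X^(d-1))^2/12^d) + 2^d*((X^(d-1)/2^(d-1))*b)
      - (q + 2*(X^d/X)*b + (X^2-1)^d/(2^d*3^d)/X^2 - e0/X^2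
          - 2*((X^2-1)^d/(2^d*3^d))/X^2)
    = ((2*X^2+1)^d + (X^2-1)^d - (1+2^d)*X^(2*d))/(6^d*X^2) := by
  have h2 : (2:ℝ)^d = 2*2^(d-1) := by
    rw [← pow_succ']; congr 1; omega
  have hXd : X^d = X*X^(d-1) := by
    rw [← pow_succ']; congr 1; omega
  have h12 : (12:ℝ)^d = 2^d*(2^d*3^d) := by
    rw [← mul_pow, ← mul_pow]; norm_num
  have h6 : (6:ℝ)^d = 2^d*3^d := by
    rw [← mul_pow]; norm_num
  have h2d : X^(2*d) = (X^(d-1))^2*X^2 := by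
    rw [← pow_mul, ← pow_add]; congr 1; omega
  have h2n : (2:ℝ)^(d-1) ≠ 0 := by positivity
  have h3n : (3:ℝ)^d ≠ 0 := by positivity
  rw [h12, h6, h2d, hXd, h2]
  field_simp
  ring

lemma TF_eq {M d : ℕ} (hM : 1 ≤ M) {H : Finset (Fin d → Fin M)}
    (hH : IsWeakLatinHypercube H) (g : Fin d → Fin 3)
    (e0 : ∃ k, g k ≠ 0) (e1 : ∃ k, g k ≠ 1) (e2 : ∃ k, g k ≠ 2) :
    ∑ x ∈ H, ∑ y ∈ H, ∏ k, fF M (g k) (x k) (y k)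
      = (∏ k, (if g k = 0 then (M:ℝ) * (-(((M:ℝ)^2 - 1)/(6*M)))
          else (M:ℝ)*(((M:ℝ)^2 - 1)/(6*M)))) / (M:ℝ)^2 := by
  have h := Tgen hM hH (fF M) (-(((M:ℝ)^2 - 1)/(6*M)))
    (fun a b b' => by simp [fF]) (fun a a' b => by simp [fF])
    (fun a => by simpa [fF] using rowsum M hM a)
    (fun b => by simpa [fF] using rowsum' M hM b) g e0 e1 e2
  rw [h]
  have w1 : (∑ a : Fin M, ∑ b : Fin M, fF M 1 a b) = (M:ℝ)*(((M:ℝ)^2 - 1)/(6*M)) := by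
    have : (∑ a : Fin M, ∑ b : Fin M, fF M 1 a b)
        = ∑ a : Fin M, ∑ b : Fin M, bet M a :=
      Finset.sum_congr rfl (fun a _ => Finset.sum_congr rfl (fun b _ => by simp [fF]))
    rw [this, sumsum_bet1 M hM]
  have w2 : (∑ a : Fin M, ∑ b : Fin M, fF M 2 a b) = (M:ℝ)*(((M:ℝ)^2 - 1)/(6*M)) := by
    have : (∑ a : Fin M, ∑ b : Fin M, fF M 2 a b)
        = ∑ a : Fin M, ∑ b : Fin M, bet M b :=
      Finset.sum_congr rfl (fun a _ => Finset.sum_congr rfl (fun b _ => by simp [fF]))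
    rw [this, sumsum_bet2 M hM]
  congr 1
  apply Finset.prod_congr rfl
  intro k _
  rcases fin3cases (g k) with hk|hk|hk
  · rw [hk]; norm_num
  · rw [hk, if_neg (by decide), if_pos rfl, w1]; norm_num
  · rw [hk, if_neg (by decide), if_neg (by decide), w2,
      if_neg (show (2:Fin 3) ≠ 0 from by decide)]

lemma two_min (u v : ℝ) :
    2*(min u v - u*v) = (-|u-v| + (u-v)^2) + u*(1-u) + v*(1-v) := by
  rcases le_total u v with h|h
  · rw [min_eq_left h, abs_of_nonpos (by linarith)]; ring
  · rw [min_eq_right h, abs_of_nonneg (by linarith)]; ring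

lemma split_singleton {α : Type*} [Fintype α] [DecidableEq α] (T U : α → ℝ) (c : α)
    (h : ∀ g, g ≠ c → T g = U g) :
    ∑ g : α, T g = (∑ g : α, U g) + (T c - U c) := by
  have h1 : ∑ g ∈ ({c} : Finset α), (T g - U g) = ∑ g : α, (T g - U g) :=
    Finset.sum_subset (Finset.subset_univ _) (fun g _ hg => by
      rw [h g (by simpa using hg), sub_self])
  rw [Finset.sum_singleton, Finset.sum_sub_distrib] at h1
  linarith

lemma split_three {α : Type*} [Fintype α] [DecidableEq α] (T U : α → ℝ) (c0 c1 c2 : α)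
    (h01 : c0 ≠ c1) (h02 : c0 ≠ c2) (h12 : c1 ≠ c2)
    (h : ∀ g, g ≠ c0 → g ≠ c1 → g ≠ c2 → T g = U g) :
    ∑ g : α, T g = (∑ g : α, U g) + (T c0 - U c0) + (T c1 - U c1) + (T c2 - U c2) := by
  have h1 : ∑ g ∈ ({c0, c1, c2} : Finset α), (T g - U g) = ∑ g : α, (T g - U g) :=
    Finset.sum_subset (Finset.subset_univ _) (fun g _ hg => by
      simp only [Finset.mem_insert, Finset.mem_singleton, not_or] at hg
      rw [h g hg.1 hg.2.1 hg.2.2, sub_self])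
  rw [Finset.sum_insert (by simp [h01, h02]), Finset.sum_insert (by simp [h12]),
    Finset.sum_singleton, Finset.sum_sub_distrib] at h1
  linarith

lemma sum_U_eval {d : ℕ} (w : Fin 3 → ℝ) :
    ∑ g : Fin d → Fin 3, ∏ k : Fin d, w (g k) = (w 0 + w 1 + w 2)^d := by
  have h := Finset.prod_univ_sum (fun _ : Fin d => (univ : Finset (Fin 3)))
    (fun _ j => w j)
  rw [Fintype.piFinset_univ] at h
  rw [← h, Fin.sum_univ_three, Finset.prod_const, Finset.card_univ, Fintype.card_fin]

theorem stmt_10 (M d : ℕ) (hM : 1 ≤ M) (hd : 2 ≤ d)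
    (H : Finset (Fin d → Fin M)) (hH : IsWeakLatinHypercube H) :
    (-((M : ℝ) ^ (d - 1)) ^ 2 / 3 ^ d +
        ∑ x ∈ H, ∑ y ∈ H,
          ∏ k : Fin d,
            ((1 : ℝ) / 2 - |(x k : ℝ) / M - (y k : ℝ) / M| +
              |(x k : ℝ) / M - (y k : ℝ) / M| ^ 2)) -
      2 ^ d *
        (((M : ℝ) ^ (d - 1)) ^ 2 / 12 ^ d -
          ((M : ℝ) ^ (d - 1) / 2 ^ (d - 1)) *
            ∑ x ∈ H, ∏ k : Fin d, ((x k : ℝ) / M * (1 - (x k : ℝ) / M)) +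
          ∑ x ∈ H, ∑ y ∈ H,
            ∏ k : Fin d,
              (min ((x k : ℝ) / M) ((y k : ℝ) / M) - (x k : ℝ) / M * ((y k : ℝ) / M))) =
      ((2 * (M : ℝ) ^ 2 + 1) ^ d + ((M : ℝ) ^ 2 - 1) ^ d - (1 + 2 ^ d) * (M : ℝ) ^ (2 * d)) /
        (6 ^ d * (M : ℝ) ^ 2) := by
  classical
  have hd1 : 1 ≤ d := by omega
  have hX : (M:ℝ) ≠ 0 := by positivity
  set σ : ℝ := ((M:ℝ)^2 - 1)/(6*M) with hσdef
  set Q : ℝ := ∑ x ∈ H, ∑ y ∈ H, ∏ k : Fin d, Gf M (x k) (y k) with hQdef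
  set Bq : ℝ := ∑ x ∈ H, ∏ k : Fin d, ((x k : ℝ) / M * (1 - (x k : ℝ) / M)) with hBdef
  set E0 : ℝ := ((M:ℝ) * (-σ))^d with hE0def
  -- pointwise kernels
  have hPk : ∀ (x y : Fin d → Fin M) (k : Fin d),
      ((1 : ℝ) / 2 - |(x k : ℝ) / M - (y k : ℝ) / M| +
        |(x k : ℝ) / M - (y k : ℝ) / M| ^ 2)
      = ∑ j : Fin 3, fP M j (x k) (y k) := by
    intro x y k
    have e1 : fP M 0 (x k) (y k) = Gf M (x k) (y k) := by simp [fP]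
    have e2 : fP M 1 (x k) (y k) = 1/4 := by simp [fP]
    have e3 : fP M 2 (x k) (y k) = 1/4 := by simp [fP]
    rw [Fin.sum_univ_three, e1, e2, e3]
    unfold Gf
    rw [sq_abs]
    ring
  have hEk : ∀ (x y : Fin d → Fin M) (k : Fin d),
      (2:ℝ) * (min ((x k : ℝ) / M) ((y k : ℝ) / M) - (x k : ℝ) / M * ((y k : ℝ) / M))
      = ∑ j : Fin 3, fF M j (x k) (y k) := by
    intro x y k
    have e1 : fF M 0 (x k) (y k) = Gf M (x k) (y k) := by simp [fF]
    have e2 : fF M 1 (x k) (y k) = bet M (x k) := by simp [fF]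
    have e3 : fF M 2 (x k) (y k) = bet M (y k) := by simp [fF]
    rw [Fin.sum_univ_three, e1, e2, e3, two_min]
    unfold Gf bet
    ring
  -- expansion of P sum
  have hSP : (∑ x ∈ H, ∑ y ∈ H,
      ∏ k : Fin d, ((1 : ℝ) / 2 - |(x k : ℝ) / M - (y k : ℝ) / M| +
        |(x k : ℝ) / M - (y k : ℝ) / M| ^ 2))
      = Q + (2*(M:ℝ)^2+1)^d/((2:ℝ)^d*3^d)/(M:ℝ)^2 - E0/(M:ℝ)^2 := by
    have step1 : (∑ x ∈ H, ∑ y ∈ H,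
        ∏ k : Fin d, ((1 : ℝ) / 2 - |(x k : ℝ) / M - (y k : ℝ) / M| +
          |(x k : ℝ) / M - (y k : ℝ) / M| ^ 2))
        = ∑ g : Fin d → Fin 3, ∑ x ∈ H, ∑ y ∈ H,
            ∏ k : Fin d, fP M (g k) (x k) (y k) := by
      rw [Finset.sum_congr rfl (fun x _ => Finset.sum_congr rfl (fun y _ => by
        rw [Finset.prod_congr rfl (fun k _ => hPk x y k), Finset.prod_univ_sum,
          Fintype.piFinset_univ]))]
      rw [Finset.sum_congr rfl (fun x _ => Finset.sum_comm)]
      exact Finset.sum_comm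
    rw [step1]
    have hsplit := split_singleton
      (fun g : Fin d → Fin 3 => ∑ x ∈ H, ∑ y ∈ H, ∏ k : Fin d, fP M (g k) (x k) (y k))
      (fun g : Fin d → Fin 3 =>
        (∏ k : Fin d, (if g k = 0 then (M:ℝ) * (-σ) else (M:ℝ)^2/4)) / (M:ℝ)^2)
      (fun _ => (0:Fin 3))
      (fun g hg => TP_eq hM hd1 hH g hg)
    beta_reduce at hsplit
    rw [hsplit]
    have hU : ∑ g : Fin d → Fin 3,
        (∏ k : Fin d, (if g k = 0 then (M:ℝ) * (-σ) else (M:ℝ)^2/4)) / (M:ℝ)^2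
        = (2*(M:ℝ)^2+1)^d/((2:ℝ)^d*3^d)/(M:ℝ)^2 := by
      rw [← Finset.sum_div]
      rw [sum_U_eval (fun j : Fin 3 => if j = 0 then (M:ℝ) * (-σ) else (M:ℝ)^2/4)]
      have hval : ((if (0:Fin 3) = 0 then (M:ℝ) * (-σ) else (M:ℝ)^2/4)
          + (if (1:Fin 3) = 0 then (M:ℝ) * (-σ) else (M:ℝ)^2/4)
          + (if (2:Fin 3) = 0 then (M:ℝ) * (-σ) else (M:ℝ)^2/4))
          = (2*(M:ℝ)^2+1)/6 := by
        rw [if_pos rfl, if_neg (by decide), if_neg (by decide), hσdef]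
        field_simp
        ring
      rw [hval, div_pow]
      rw [show ((6:ℝ)^d = 2^d*3^d) from by rw [← mul_pow]; norm_num]
    have hTc0 : (∑ x ∈ H, ∑ y ∈ H, ∏ k : Fin d, fP M ((fun _ => (0:Fin 3)) k) (x k) (y k)) = Q := by
      rw [hQdef]
      exact Finset.sum_congr rfl (fun x _ => Finset.sum_congr rfl (fun y _ =>
        Finset.prod_congr rfl (fun k _ => by simp [fP])))
    have hUc0 : ((∏ k : Fin d, (if (fun _ => (0:Fin 3)) k = 0 then (M:ℝ) * (-σ)
        else (M:ℝ)^2/4)) / (M:ℝ)^2) = E0/(M:ℝ)^2 := by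
      rw [hE0def]
      congr 1
      rw [Finset.prod_congr rfl (fun k _ => if_pos rfl), Finset.prod_const,
        Finset.card_univ, Fintype.card_fin]
    rw [hU, hTc0, hUc0]
    ring
  -- extreme part
  have hBq : Bq = ∑ x ∈ H, ∏ k : Fin d, bet M (x k) := rfl
  have hMσ : (M:ℝ)*σ = ((M:ℝ)^2 - 1)/6 := by
    rw [hσdef]; field_simp
  have c0ne1 : (fun _ : Fin d => (0:Fin 3)) ≠ (fun _ => 1) := by
    intro h
    have := congrFun h ⟨0, by omega⟩
    exact absurd this (by decide)
  have c0ne2 : (fun _ : Fin d => (0:Fin 3)) ≠ (fun _ => 2) := by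
    intro h
    have := congrFun h ⟨0, by omega⟩
    exact absurd this (by decide)
  have c1ne2 : (fun _ : Fin d => (1:Fin 3)) ≠ (fun _ => 2) := by
    intro h
    have := congrFun h ⟨0, by omega⟩
    exact absurd this (by decide)
  have hSF : (2:ℝ)^d * (∑ x ∈ H, ∑ y ∈ H, ∏ k : Fin d,
      (min ((x k : ℝ)/M) ((y k : ℝ)/M) - (x k : ℝ)/M * ((y k : ℝ)/M)))
      = Q + 2*((M:ℝ)^d/M)*Bq + ((M:ℝ)^2-1)^d/((2:ℝ)^d*3^d)/(M:ℝ)^2 - E0/(M:ℝ)^2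
          - 2*(((M:ℝ)^2-1)^d/((2:ℝ)^d*3^d))/(M:ℝ)^2 := by
    have hxy : ∀ x y : Fin d → Fin M,
        (2:ℝ)^d * ∏ k : Fin d,
          (min ((x k : ℝ)/M) ((y k : ℝ)/M) - (x k : ℝ)/M * ((y k : ℝ)/M))
        = ∑ g : Fin d → Fin 3, ∏ k : Fin d, fF M (g k) (x k) (y k) := by
      intro x y
      have h2d : (2:ℝ)^d * ∏ k : Fin d,
          (min ((x k : ℝ)/M) ((y k : ℝ)/M) - (x k : ℝ)/M * ((y k : ℝ)/M))
          = ∏ k : Fin d, ((2:ℝ) *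
            (min ((x k : ℝ)/M) ((y k : ℝ)/M) - (x k : ℝ)/M * ((y k : ℝ)/M))) := by
        rw [Finset.prod_mul_distrib, Finset.prod_const, Finset.card_univ,
          Fintype.card_fin]
      rw [h2d, Finset.prod_congr rfl (fun k _ => hEk x y k), Finset.prod_univ_sum,
        Fintype.piFinset_univ]
    have step1 : (2:ℝ)^d * (∑ x ∈ H, ∑ y ∈ H, ∏ k : Fin d,
        (min ((x k : ℝ)/M) ((y k : ℝ)/M) - (x k : ℝ)/M * ((y k : ℝ)/M)))
        = ∑ g : Fin d → Fin 3, ∑ x ∈ H, ∑ y ∈ H,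
            ∏ k : Fin d, fF M (g k) (x k) (y k) := by
      rw [Finset.mul_sum]
      rw [Finset.sum_congr rfl (fun x _ => by rw [Finset.mul_sum])]
      rw [Finset.sum_congr rfl (fun x _ =>
        Finset.sum_congr rfl (fun y _ => hxy x y))]
      rw [Finset.sum_congr rfl (fun x _ => Finset.sum_comm)]
      exact Finset.sum_comm
    rw [step1]
    have hsplit := split_three
      (fun g : Fin d → Fin 3 => ∑ x ∈ H, ∑ y ∈ H, ∏ k : Fin d, fF M (g k) (x k) (y k))
      (fun g : Fin d → Fin 3 =>
        (∏ k : Fin d, (if g k = 0 then (M:ℝ) * (-σ) else (M:ℝ)*σ)) / (M:ℝ)^2)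
      (fun _ => (0:Fin 3)) (fun _ => (1:Fin 3)) (fun _ => (2:Fin 3))
      c0ne1 c0ne2 c1ne2
      (fun g hg0 hg1 hg2 => TF_eq hM hH g
        (by by_contra hc; push_neg at hc; exact hg0 (funext hc))
        (by by_contra hc; push_neg at hc; exact hg1 (funext hc))
        (by by_contra hc; push_neg at hc; exact hg2 (funext hc)))
    beta_reduce at hsplit
    rw [hsplit]
    have hU : ∑ g : Fin d → Fin 3,
        (∏ k : Fin d, (if g k = 0 then (M:ℝ) * (-σ) else (M:ℝ)*σ)) / (M:ℝ)^2
        = ((M:ℝ)^2-1)^d/((2:ℝ)^d*3^d)/(M:ℝ)^2 := by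
      rw [← Finset.sum_div]
      rw [sum_U_eval (fun j : Fin 3 => if j = 0 then (M:ℝ) * (-σ) else (M:ℝ)*σ)]
      have hval : ((if (0:Fin 3) = 0 then (M:ℝ) * (-σ) else (M:ℝ)*σ)
          + (if (1:Fin 3) = 0 then (M:ℝ) * (-σ) else (M:ℝ)*σ)
          + (if (2:Fin 3) = 0 then (M:ℝ) * (-σ) else (M:ℝ)*σ))
          = ((M:ℝ)^2-1)/6 := by
        rw [if_pos rfl, if_neg (by decide), if_neg (by decide), ← hMσ]
        ring
      rw [hval, div_pow]
      rw [show ((6:ℝ)^d = 2^d*3^d) from by rw [← mul_pow]; norm_num]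
    have hTc0 : (∑ x ∈ H, ∑ y ∈ H,
        ∏ k : Fin d, fF M ((fun _ => (0:Fin 3)) k) (x k) (y k)) = Q := by
      rw [hQdef]
      exact Finset.sum_congr rfl (fun x _ => Finset.sum_congr rfl (fun y _ =>
        Finset.prod_congr rfl (fun k _ => by simp [fF])))
    have hTc1 : (∑ x ∈ H, ∑ y ∈ H,
        ∏ k : Fin d, fF M ((fun _ => (1:Fin 3)) k) (x k) (y k)) = ((M:ℝ)^d/M) * Bq := by
      calc (∑ x ∈ H, ∑ y ∈ H, ∏ k : Fin d, fF M ((fun _ => (1:Fin 3)) k) (x k) (y k))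
          = ∑ x ∈ H, ∑ _y ∈ H, ∏ k : Fin d, bet M (x k) :=
            Finset.sum_congr rfl (fun x _ => Finset.sum_congr rfl (fun y _ =>
              Finset.prod_congr rfl (fun k _ => by simp [fF])))
        _ = ∑ x ∈ H, (H.card:ℝ) * ∏ k : Fin d, bet M (x k) := by
            exact Finset.sum_congr rfl (fun x _ => by
              rw [Finset.sum_const, nsmul_eq_mul])
        _ = (H.card:ℝ) * ∑ x ∈ H, ∏ k : Fin d, bet M (x k) := by
            rw [Finset.mul_sum]
        _ = ((M:ℝ)^d/M) * Bq := by rw [card_H hM hd1 hH, ← hBq]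
    have hTc2 : (∑ x ∈ H, ∑ y ∈ H,
        ∏ k : Fin d, fF M ((fun _ => (2:Fin 3)) k) (x k) (y k)) = ((M:ℝ)^d/M) * Bq := by
      calc (∑ x ∈ H, ∑ y ∈ H, ∏ k : Fin d, fF M ((fun _ => (2:Fin 3)) k) (x k) (y k))
          = ∑ _x ∈ H, ∑ y ∈ H, ∏ k : Fin d, bet M (y k) :=
            Finset.sum_congr rfl (fun x _ => Finset.sum_congr rfl (fun y _ =>
              Finset.prod_congr rfl (fun k _ => by simp [fF])))
        _ = ∑ _x ∈ H, Bq := Finset.sum_congr rfl (fun x _ => by rw [hBq])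
        _ = (H.card:ℝ) * Bq := by rw [Finset.sum_const, nsmul_eq_mul]
        _ = ((M:ℝ)^d/M) * Bq := by rw [card_H hM hd1 hH]
    have hUc0 : ((∏ k : Fin d, (if (fun _ => (0:Fin 3)) k = 0 then (M:ℝ) * (-σ)
        else (M:ℝ)*σ)) / (M:ℝ)^2) = E0/(M:ℝ)^2 := by
      rw [hE0def]
      congr 1
      rw [Finset.prod_congr rfl (fun k _ => if_pos rfl), Finset.prod_const,
        Finset.card_univ, Fintype.card_fin]
    have hUc12 : ∀ j : Fin 3, j ≠ 0 →
        ((∏ k : Fin d, (if (fun _ => j) k = 0 then (M:ℝ) * (-σ)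
          else (M:ℝ)*σ)) / (M:ℝ)^2)
        = (((M:ℝ)^2-1)^d/((2:ℝ)^d*3^d))/(M:ℝ)^2 := by
      intro j hj
      congr 1
      rw [Finset.prod_congr rfl (fun k _ => if_neg hj), Finset.prod_const,
        Finset.card_univ, Fintype.card_fin, hMσ, div_pow]
      rw [show ((6:ℝ)^d = 2^d*3^d) from by rw [← mul_pow]; norm_num]
    rw [hU, hTc0, hTc1, hTc2, hUc0, hUc12 1 (by decide), hUc12 2 (by decide)]
    ring
  rw [mul_add, mul_sub, hSP, hSF]
  linear_combination final_arith d hd (M:ℝ) Q Bq E0 hX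
end

section
/- If X ⊆ [0,1)^d, d ≥ 2, is the point set of a weak M-Latin hypercube with N = #X = M^{d-1} points, then L₂-periodic(X)² ≥ (d/(2·3^d))·N^{2(d-2)/(d-1)}. -/
open Finset

theorem IsWeakLatinHypercube.card_mul_eq_pow {d M : ℕ} {H : Finset (Fin d → Fin M)}
    (hH : IsWeakLatinHypercube H) (k : Fin d) : #H * M = M ^ d := by
  choose v hv hunique using hH k
  let e : (Fin d → Fin M) ≃ H × Fin M :=
    { toFun x := (⟨Function.update x k (v x), hv x⟩, x k)
      invFun p := Function.update p.1 k p.2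
      left_inv x := by simp
      right_inv := by
        rintro ⟨⟨h, hh⟩, w⟩
        have : v (Function.update h k w) = h k :=
          (hunique _ _ (by simpa using hh)).symm
        simp [this] }
  simpa using (Fintype.card_congr e).symm

theorem pow_rpow_div_natCast {x : ℝ} (hx : 0 ≤ x) (k : ℕ) {m : ℕ} (hm : m ≠ 0) :
    (x ^ m) ^ ((k : ℝ) / m) = x ^ k := by
  rw [← Real.rpow_natCast x m, ← Real.rpow_mul hx, mul_div_cancel₀ _ (by exact_mod_cast hm),
    Real.rpow_natCast]

section GramKernel

variable {ι α R : Type*} [Fintype ι] [DecidableEq ι] [Fintype R]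

theorem sum_sum_prod_gram_eq_sum_sq (H : Finset (ι → α)) (φ : R → α → ℝ) :
    ∑ x ∈ H, ∑ y ∈ H, ∏ k, ∑ r, φ r (x k) * φ r (y k) =
      ∑ p : ι → R, (∑ x ∈ H, ∏ k, φ (p k) (x k)) ^ 2 := by
  simp only [Fintype.prod_sum, prod_mul_distrib, sq, sum_mul_sum]
  conv_rhs => rw [sum_comm]
  exact sum_congr rfl fun _ _ => sum_comm

theorem sq_card_mul_pow_le_sum_sum_prod_gram (H : Finset (ι → α)) (φ : R → α → ℝ) {r₀ : R}
    {c : ℝ} (hc : ∀ a, φ r₀ a = c) :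
    (#H * c ^ Fintype.card ι) ^ 2 ≤ ∑ x ∈ H, ∑ y ∈ H, ∏ k, ∑ r, φ r (x k) * φ r (y k) := by
  rw [sum_sum_prod_gram_eq_sum_sq]
  calc (#H * c ^ Fintype.card ι) ^ 2 = (∑ x ∈ H, ∏ k, φ r₀ (x k)) ^ 2 := by simp [hc]
    _ ≤ _ := single_le_sum (f := fun p : ι → R => (∑ x ∈ H, ∏ k, φ (p k) (x k)) ^ 2)
      (fun p _ => sq_nonneg _) (mem_univ fun _ => r₀)

end GramKernel

theorem sum_range_quadratic (p q r : ℝ) (n : ℕ) :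
    ∑ s ∈ range n, (p + q * s + r * s ^ 2) =
      p * n + q * (n * (n - 1) / 2) + r * (n * (n - 1) * (2 * n - 1) / 6) := by
  induction n with
  | zero => simp
  | succ n ih => rw [sum_range_succ, ih]; push_cast; ring

theorem sum_range_ite_lt (f : ℕ → ℝ) {a n : ℕ} (h : a < n) :
    ∑ s ∈ range n, (if a < s then f s else 0) =
      ∑ s ∈ range n, f s - ∑ s ∈ range (a + 1), f s := by
  rw [← sum_filter, show (range n).filter (a < ·) = Ico (a + 1) n by ext; simp; omega,
    sum_Ico_eq_sub _ h]

/-- For `a, s < M` this is `((a - s) mod M) / M` minus its mean `(M - 1) / (2M)`. -/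
noncomputable def sawtooth (M a s : ℕ) : ℝ :=
  ((a : ℝ) - s) / M - ((M : ℝ) - 1) / (2 * M) + if a < s then 1 else 0

theorem sum_sawtooth_mul_sawtooth {M a b : ℕ} (hb : b ≤ a) (ha : a < M) :
    (1 : ℝ) / 2 - (a - b) / M + ((a - b) / M) ^ 2 =
      1 / 3 + 1 / (6 * M ^ 2) + 2 / M * ∑ s ∈ range M, sawtooth M a s * sawtooth M b s := by
  have hM : (M : ℝ) ≠ 0 := Nat.cast_ne_zero.mpr (by omega)
  set A : ℝ := a / M - (M - 1) / (2 * M)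
  set B : ℝ := b / M - (M - 1) / (2 * M)
  -- `b ≤ a`, so the indicator of `a < s` absorbs that of `b < s` in the product.
  have hsplit : ∀ s ∈ range M, sawtooth M a s * sawtooth M b s =
      (A * B + (-(A + B) / M) * s + 1 / M ^ 2 * s ^ 2) +
      ((if b < s then A + (-1 / M) * s + 0 * s ^ 2 else 0) +
       (if a < s then (B + 1) + (-1 / M) * s + 0 * s ^ 2 else 0)) := by
    intro s _
    unfold sawtooth
    simp only [A, B]
    split_ifs <;> first | omega | (field_simp; ring)
  rw [sum_congr rfl hsplit, sum_add_distrib, sum_range_quadratic, sum_add_distrib,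
    sum_range_ite_lt _ ha, sum_range_ite_lt _ (hb.trans_lt ha)]
  simp only [sum_range_quadratic, A, B]
  push_cast
  field_simp
  ring

noncomputable def periodicFeature (M : ℕ) : Option (Fin M) → Fin M → ℝ
  | none, _ => √(1 / 3 + 1 / (6 * M ^ 2))
  | some s, a => √(2 / M) * sawtooth M a s

theorem periodicKernel_eq_sum_periodicFeature {M : ℕ} (a b : Fin M) :
    (1 : ℝ) / 2 - |(a : ℝ) / M - (b : ℝ) / M| + |(a : ℝ) / M - (b : ℝ) / M| ^ 2 =
      ∑ r, periodicFeature M r a * periodicFeature M r b := by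
  wlog hba : b ≤ a generalizing a b
  · rw [abs_sub_comm, this b a (le_of_not_ge hba)]
    simp only [mul_comm]
  have hM : 0 < M := a.pos
  rw [Fintype.sum_option, ← sub_div,
    abs_of_nonneg (div_nonneg (sub_nonneg.mpr (by exact_mod_cast hba)) M.cast_nonneg),
    sum_sawtooth_mul_sawtooth hba a.isLt,
    ← Fin.sum_univ_eq_sum_range (fun s => sawtooth M a s * sawtooth M b s), mul_sum]
  simp only [periodicFeature, mul_mul_mul_comm _ (sawtooth _ _ _)]
  rw [Real.mul_self_sqrt (by positivity), Real.mul_self_sqrt (by positivity)]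

theorem sq_card_mul_pow_le_sum_sum_prod_periodicKernel {d M : ℕ} (H : Finset (Fin d → Fin M)) :
    (#H : ℝ) ^ 2 * (1 / 3 + 1 / (6 * M ^ 2)) ^ d ≤
      ∑ x ∈ H, ∑ y ∈ H, ∏ k, ((1 : ℝ) / 2 - |(x k : ℝ) / M - (y k : ℝ) / M| +
        |(x k : ℝ) / M - (y k : ℝ) / M| ^ 2) := by
  simp_rw [periodicKernel_eq_sum_periodicFeature]
  convert sq_card_mul_pow_le_sum_sum_prod_gram H (periodicFeature M) (r₀ := none)
    (fun _ => rfl) using 1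
  rw [mul_pow, Fintype.card_fin, ← pow_mul, mul_comm _ 2, pow_mul, Real.sq_sqrt (by positivity)]

theorem stmt_11 (M d : ℕ) (hM : 1 ≤ M) (hd : 2 ≤ d)
    (H : Finset (Fin d → Fin M)) (hH : IsWeakLatinHypercube H) :
    -((M : ℝ) ^ (d - 1)) ^ 2 / 3 ^ d +
        ∑ x ∈ H, ∑ y ∈ H,
          ∏ k : Fin d,
            ((1 : ℝ) / 2 - |(x k : ℝ) / M - (y k : ℝ) / M| +
              |(x k : ℝ) / M - (y k : ℝ) / M| ^ 2) ≥
      ((d : ℝ) / (2 * 3 ^ d)) *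
        ((M : ℝ) ^ (d - 1)) ^ ((2 * ((d : ℝ) - 2)) / ((d : ℝ) - 1)) := by
  obtain ⟨n, rfl⟩ := Nat.exists_eq_add_of_le' hd
  have hcard : (#H : ℝ) = M ^ (n + 1) := by
    have h := hH.card_mul_eq_pow 0
    rw [pow_succ] at h
    exact_mod_cast Nat.eq_of_mul_eq_mul_right hM h
  have hexponent :
      ((M : ℝ) ^ (n + 1)) ^ ((2 * (((n + 2 : ℕ) : ℝ) - 2)) / (((n + 2 : ℕ) : ℝ) - 1)) =
        (M : ℝ) ^ (2 * n) := by
    convert pow_rpow_div_natCast M.cast_nonneg (2 * n) n.succ_ne_zero using 3 <;> push_cast <;> ring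
  have hbernoulli := pow_add_mul_le_add_pow (a := (1 / 3 : ℝ)) (b := 1 / (6 * M ^ 2))
    (by norm_num) (by positivity) (n + 2)
  rw [show n + 2 - 1 = n + 1 from rfl] at hbernoulli ⊢
  rw [hexponent, ge_iff_le, ← hcard]
  calc ((n + 2 : ℕ) : ℝ) / (2 * 3 ^ (n + 2)) * M ^ (2 * n)
      = (#H : ℝ) ^ 2 * ((n + 2 : ℕ) * (1 / 3) ^ (n + 1) * (1 / (6 * M ^ 2))) := by
        rw [hcard, one_div_pow]; field_simp; ring
    _ ≤ (#H : ℝ) ^ 2 * ((1 / 3 + 1 / (6 * M ^ 2)) ^ (n + 2) - (1 / 3) ^ (n + 2)) := by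
        gcongr; linarith
    _ = -(#H : ℝ) ^ 2 / 3 ^ (n + 2) + (#H : ℝ) ^ 2 * (1 / 3 + 1 / (6 * M ^ 2)) ^ (n + 2) := by
        rw [one_div_pow]; ring
    _ ≤ _ := by gcongr; exact sq_card_mul_pow_le_sum_sum_prod_periodicKernel H
end

section
/- Let X ⊆ [0,1)^d be a finite set with N points and let w : X → ℝ be weights. Then the weighted periodic L₂-discrepancy satisfies ∫_{[0,1)^d} ∫_{[0,1)^d} D_{(X,w)}(x,y)² dy dx = −(∑_{x∈X} w(x))²/3^d + ∑_{x,y∈X} w(x)w(y)·∏_{k=1}^d (1/2 − |x_k−y_k| + |x_k−y_k|²), where D_{(X,w)}(x,y) = ∑_{z∈X, z∈[x,y)} w(z) − (∑_{z∈X} w(z))·|[x,y)|, with [x,y) the (possibly wrap-around) periodic box and |[x,y)| its Lebesgue measure. -/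
/-!
Expanding the square, `D² = ∑_{z,z'} w z w z' (I_z - L) (I_{z'} - L)` with
`I_z(x,y) = ∏_k 1[z_k ∈ [x_k,y_k)]` and `L(x,y) = ∏_k |[x_k,y_k)|`. Each of the four terms of
`(I_z - L) (I_{z'} - L)` is a product over the coordinates, so by Fubini its integral over
`[0,1)^d × [0,1)^d` is a product of one-dimensional double integrals over `[0,1)²`. These are
piecewise polynomial: they equal `1/3` for `L²` and for `I_z L` (whatever `z` is), and
`1/2 - |z - z'| + |z - z'|²` for `I_z I_{z'}`, so the terms involving `L` add up to `-(∑ w)² / 3^d`.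
-/

open MeasureTheory

/-- Length of the (possibly wrap-around) periodic interval `[a,b)` in `[0,1)`. -/
noncomputable def perLen (a b : ℝ) : ℝ := if a < b then b - a else 1 - a + b

/-- Indicator of membership `z ∈ [a,b)` for the periodic interval. -/
noncomputable def perInd (a b z : ℝ) : ℝ :=
  if a < b then (if a ≤ z ∧ z < b then 1 else 0) else (if a ≤ z ∨ z < b then 1 else 0)

/-- Discrepancy function of the weighted point set `(X, w)`. -/
noncomputable def perDisc {d : ℕ} (X : Finset (Fin d → ℝ)) (w : (Fin d → ℝ) → ℝ)
    (x y : Fin d → ℝ) : ℝ :=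
  (∑ z ∈ X, w z * ∏ k : Fin d, perInd (x k) (y k) (z k)) -
    (∑ z ∈ X, w z) * ∏ k : Fin d, perLen (x k) (y k)

open Set

def HasIntervalIntegral (f : ℝ → ℝ) (u v c : ℝ) : Prop :=
  IntervalIntegrable f volume u v ∧ ∫ t in u..v, f t = c

namespace HasIntervalIntegral

variable {f : ℝ → ℝ} {u v w c c₁ c₂ : ℝ}

theorem trans (h₁ : HasIntervalIntegral f u v c₁) (h₂ : HasIntervalIntegral f v w c₂) :
    HasIntervalIntegral f u w (c₁ + c₂) :=
  ⟨h₁.1.trans h₂.1, by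
    rw [← intervalIntegral.integral_add_adjacent_intervals h₁.1 h₂.1, h₁.2, h₂.2]⟩

theorem of_eqOn_quadratic (p q r : ℝ) (huv : u ≤ v)
    (hf : ∀ t ∈ Ioc u v, f t = p + q * t + r * t ^ 2) :
    HasIntervalIntegral f u v
      (p * (v - u) + q * (v ^ 2 - u ^ 2) / 2 + r * (v ^ 3 - u ^ 3) / 3) := by
  have hf' : EqOn f (fun t => p + q * t + r * t ^ 2) (uIoc u v) := by
    rwa [uIoc_of_le huv]
  refine ⟨(Continuous.intervalIntegrable (by fun_prop) u v).congr hf'.symm, ?_⟩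
  rw [intervalIntegral.integral_congr_ae (Filter.Eventually.of_forall fun t ht => hf' ht),
    intervalIntegral.integral_add (Continuous.intervalIntegrable (by fun_prop) _ _)
      (Continuous.intervalIntegrable (by fun_prop) _ _),
    intervalIntegral.integral_add intervalIntegrable_const
      (Continuous.intervalIntegrable (by fun_prop) _ _),
    intervalIntegral.integral_const_mul q (fun t => t)]
  simp only [intervalIntegral.integral_const, intervalIntegral.integral_const_mul, integral_id,
    integral_pow, smul_eq_mul]
  ring

theorem integrableOn_Ico (h : HasIntervalIntegral f u v c) (huv : u ≤ v) :
    IntegrableOn f (Ico u v) :=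
  ((intervalIntegrable_iff_integrableOn_Ioc_of_le huv).1 h.1).congr_set_ae Ico_ae_eq_Ioc

theorem setIntegral_Ico (h : HasIntervalIntegral f u v c) (huv : u ≤ v) :
    ∫ t in Ico u v, f t = c := by
  rw [integral_Ico_eq_integral_Ioc, ← intervalIntegral.integral_of_le huv, h.2]

theorem prod_setIntegral_Ico {ι : Type*} [Fintype ι] {f : ι → ℝ → ℝ} {c : ι → ℝ}
    (h : ∀ k, HasIntervalIntegral (f k) u v (c k)) (huv : u ≤ v) :
    ∏ k, ∫ t in Ico u v, f k t = ∏ k, c k :=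
  Finset.prod_congr rfl fun k _ => (h k).setIntegral_Ico huv

end HasIntervalIntegral

open HasIntervalIntegral

noncomputable def indLenIntegral (a z : ℝ) : ℝ :=
  if a ≤ z then 1 / 2 - (z - a) ^ 2 / 2 else (a - z) - (a - z) ^ 2 / 2

noncomputable def indIndIntegral (a z z' : ℝ) : ℝ :=
  if a ≤ min z z' then a + 1 - max z z'
  else if a ≤ max z z' then a - min z z' else a - max z z'

section UnitIntervalIntegrals

variable {a z z' : ℝ}

theorem hasIntervalIntegral_perLen_sq (ha : a ∈ Ico (0 : ℝ) 1) :
    HasIntervalIntegral (fun b => perLen a b ^ 2) 0 1 (1 / 3) := by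
  obtain ⟨ha0, ha1⟩ := ha
  convert (of_eqOn_quadratic ((1 - a) ^ 2) (2 * (1 - a)) 1 ha0 ?_).trans
    (of_eqOn_quadratic (a ^ 2) (-2 * a) 1 ha1.le ?_) using 1 <;> grind [perLen]

theorem hasIntervalIntegral_perInd_mul_perLen (ha : a ∈ Ico (0 : ℝ) 1) (hz : z ∈ Ico (0 : ℝ) 1) :
    HasIntervalIntegral (fun b => perInd a b z * perLen a b) 0 1 (indLenIntegral a z) := by
  obtain ⟨ha0, ha1⟩ := ha
  obtain ⟨hz0, hz1⟩ := hz
  rcases le_or_gt a z with haz | hza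
  · convert ((of_eqOn_quadratic (1 - a) 1 0 ha0 ?_).trans (of_eqOn_quadratic 0 0 0 haz ?_)).trans
      (of_eqOn_quadratic (-a) 1 0 hz1.le ?_) using 1 <;> grind [perInd, perLen, indLenIntegral]
  · convert ((of_eqOn_quadratic 0 0 0 hz0 ?_).trans
      (of_eqOn_quadratic (1 - a) 1 0 hza.le ?_)).trans
      (of_eqOn_quadratic 0 0 0 ha1.le ?_) using 1 <;> grind [perInd, perLen, indLenIntegral]

theorem hasIntervalIntegral_perInd_mul_perInd_of_le (ha : a ∈ Ico (0 : ℝ) 1)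
    (hz : z ∈ Ico (0 : ℝ) 1) (hz' : z' ∈ Ico (0 : ℝ) 1) (hzz' : z ≤ z') :
    HasIntervalIntegral (fun b => perInd a b z * perInd a b z') 0 1 (indIndIntegral a z z') := by
  obtain ⟨ha0, ha1⟩ := ha
  obtain ⟨hz0, hz1⟩ := hz
  obtain ⟨hz'0, hz'1⟩ := hz'
  rcases le_or_gt a z with haz | hza
  · convert ((of_eqOn_quadratic 1 0 0 ha0 ?_).trans
      (of_eqOn_quadratic 0 0 0 (haz.trans hzz') ?_)).trans
      (of_eqOn_quadratic 1 0 0 hz'1.le ?_) using 1 <;> grind [perInd, indIndIntegral]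
  rcases le_or_gt a z' with haz' | hz'a
  · convert ((of_eqOn_quadratic 0 0 0 hz0 ?_).trans (of_eqOn_quadratic 1 0 0 hza.le ?_)).trans
      (of_eqOn_quadratic 0 0 0 ha1.le ?_) using 1 <;> grind [perInd, indIndIntegral]
  · convert ((of_eqOn_quadratic 0 0 0 hz'0 ?_).trans (of_eqOn_quadratic 1 0 0 hz'a.le ?_)).trans
      (of_eqOn_quadratic 0 0 0 ha1.le ?_) using 1 <;> grind [perInd, indIndIntegral]

theorem hasIntervalIntegral_perInd_mul_perInd (ha : a ∈ Ico (0 : ℝ) 1)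
    (hz : z ∈ Ico (0 : ℝ) 1) (hz' : z' ∈ Ico (0 : ℝ) 1) :
    HasIntervalIntegral (fun b => perInd a b z * perInd a b z') 0 1 (indIndIntegral a z z') := by
  rcases le_total z z' with h | h
  · exact hasIntervalIntegral_perInd_mul_perInd_of_le ha hz hz' h
  · simpa only [mul_comm, indIndIntegral, min_comm, max_comm] using
      hasIntervalIntegral_perInd_mul_perInd_of_le ha hz' hz h

theorem hasIntervalIntegral_indLenIntegral (hz : z ∈ Ico (0 : ℝ) 1) :
    HasIntervalIntegral (fun a => indLenIntegral a z) 0 1 (1 / 3) := by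
  obtain ⟨hz0, hz1⟩ := hz
  convert (of_eqOn_quadratic (1 / 2 - z ^ 2 / 2) z (-(1 / 2)) hz0 ?_).trans
    (of_eqOn_quadratic (-z - z ^ 2 / 2) (1 + z) (-(1 / 2)) hz1.le ?_) using 1
    <;> grind [indLenIntegral]

theorem hasIntervalIntegral_indIndIntegral (hz : z ∈ Ico (0 : ℝ) 1) (hz' : z' ∈ Ico (0 : ℝ) 1) :
    HasIntervalIntegral (fun a => indIndIntegral a z z') 0 1 (1 / 2 - |z - z'| + |z - z'| ^ 2) := by
  obtain ⟨hz0, hz1⟩ := hz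
  obtain ⟨hz'0, hz'1⟩ := hz'
  convert ((of_eqOn_quadratic (1 - max z z') 1 0 (le_min hz0 hz'0) ?_).trans
    (of_eqOn_quadratic (-min z z') 1 0 min_le_max ?_)).trans
    (of_eqOn_quadratic (-max z z') 1 0 (max_lt hz1 hz'1).le ?_) using 1
    <;> grind [indIndIntegral]

end UnitIntervalIntegrals

theorem integral_pi_sum_sum_prod {α ι E : Type*} [Fintype ι] [MeasurableSpace E] {μ : Measure E}
    [SigmaFinite μ] (X : Finset α) (c : α → α → ℝ) (A : α → α → ι → E → ℝ)
    (B : α → ι → E → ℝ) (C : ι → E → ℝ) (hA : ∀ z ∈ X, ∀ z' ∈ X, ∀ k, Integrable (A z z' k) μ)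
    (hB : ∀ z ∈ X, ∀ k, Integrable (B z k) μ) (hC : ∀ k, Integrable (C k) μ) :
    ∫ y, ∑ z ∈ X, ∑ z' ∈ X, c z z' * (∏ k, A z z' k (y k) - ∏ k, B z k (y k) -
        ∏ k, B z' k (y k) + ∏ k, C k (y k)) ∂Measure.pi (fun _ => μ) =
      ∑ z ∈ X, ∑ z' ∈ X, c z z' * (∏ k, ∫ t, A z z' k t ∂μ - ∏ k, ∫ t, B z k t ∂μ -
        ∏ k, ∫ t, B z' k t ∂μ + ∏ k, ∫ t, C k t ∂μ) := by
  have hA' := fun z hz z' hz' => Integrable.fintype_prod (μ := fun _ => μ) (hA z hz z' hz')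
  have hB' := fun z hz => Integrable.fintype_prod (μ := fun _ => μ) (hB z hz)
  have hC' := Integrable.fintype_prod (μ := fun _ => μ) hC
  have hterm : ∀ z ∈ X, ∀ z' ∈ X, Integrable (fun y => c z z' * (∏ k, A z z' k (y k) -
      ∏ k, B z k (y k) - ∏ k, B z' k (y k) + ∏ k, C k (y k))) (Measure.pi fun _ => μ) :=
    fun z hz z' hz' => ((((hA' z hz z' hz').sub (hB' z hz)).sub (hB' z' hz')).add hC').const_mul _
  rw [integral_finsetSum _ fun z hz => integrable_finsetSum _ fun z' hz' => hterm z hz z' hz']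
  refine Finset.sum_congr rfl fun z hz => ?_
  rw [integral_finsetSum _ fun z' hz' => hterm z hz z' hz']
  refine Finset.sum_congr rfl fun z' hz' => ?_
  have hAB : Integrable (fun y => ∏ k, A z z' k (y k) - ∏ k, B z k (y k))
      (Measure.pi fun _ => μ) := (hA' z hz z' hz').sub (hB' z hz)
  have hABB : Integrable (fun y => ∏ k, A z z' k (y k) - ∏ k, B z k (y k) - ∏ k, B z' k (y k))
      (Measure.pi fun _ => μ) := hAB.sub (hB' z' hz')
  rw [integral_const_mul, integral_add hABB hC', integral_sub hAB (hB' z' hz'),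
    integral_sub (hA' z hz z' hz') (hB' z hz)]
  simp only [integral_fintype_prod_eq_prod]

theorem perDisc_sq {d : ℕ} (X : Finset (Fin d → ℝ)) (w : (Fin d → ℝ) → ℝ) (x y : Fin d → ℝ) :
    perDisc X w x y ^ 2 = ∑ z ∈ X, ∑ z' ∈ X, w z * w z' *
      (∏ k, perInd (x k) (y k) (z k) * perInd (x k) (y k) (z' k) -
        ∏ k, perInd (x k) (y k) (z k) * perLen (x k) (y k) -
        ∏ k, perInd (x k) (y k) (z' k) * perLen (x k) (y k) + ∏ k, perLen (x k) (y k) ^ 2) := by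
  have hD : perDisc X w x y
      = ∑ z ∈ X, w z * (∏ k, perInd (x k) (y k) (z k) - ∏ k, perLen (x k) (y k)) := by
    simp only [perDisc, mul_sub, Finset.sum_sub_distrib, Finset.sum_mul]
  rw [hD, sq, Finset.sum_mul_sum]
  refine Finset.sum_congr rfl fun z _ => Finset.sum_congr rfl fun z' _ => ?_
  simp only [Finset.prod_mul_distrib, Finset.prod_pow]
  ring

theorem setIntegral_perDisc_sq {d : ℕ} {X : Finset (Fin d → ℝ)}
    (hX : ∀ z ∈ X, ∀ k, z k ∈ Ico (0 : ℝ) 1) (w : (Fin d → ℝ) → ℝ) {x : Fin d → ℝ}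
    (hx : ∀ k, x k ∈ Ico (0 : ℝ) 1) :
    ∫ y in univ.pi fun _ : Fin d => Ico (0 : ℝ) 1, perDisc X w x y ^ 2 =
      ∑ z ∈ X, ∑ z' ∈ X, w z * w z' *
        (∏ k, indIndIntegral (x k) (z k) (z' k) - ∏ k, indLenIntegral (x k) (z k) -
          ∏ k, indLenIntegral (x k) (z' k) + ∏ _k : Fin d, (1 / 3 : ℝ)) := by
  have hIndInd z (hz : z ∈ X) z' (hz' : z' ∈ X) k :=
    hasIntervalIntegral_perInd_mul_perInd (hx k) (hX z hz k) (hX z' hz' k)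
  have hIndLen z (hz : z ∈ X) k := hasIntervalIntegral_perInd_mul_perLen (hx k) (hX z hz k)
  have hLenSq k := hasIntervalIntegral_perLen_sq (hx k)
  simp only [perDisc_sq]
  rw [volume_pi, Measure.restrict_pi_pi, integral_pi_sum_sum_prod X _
    (fun z z' k b => perInd (x k) b (z k) * perInd (x k) b (z' k))
    (fun z k b => perInd (x k) b (z k) * perLen (x k) b) (fun k b => perLen (x k) b ^ 2)
    (fun z hz z' hz' k => (hIndInd z hz z' hz' k).integrableOn_Ico zero_le_one)
    (fun z hz k => (hIndLen z hz k).integrableOn_Ico zero_le_one)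
    (fun k => (hLenSq k).integrableOn_Ico zero_le_one)]
  refine Finset.sum_congr rfl fun z hz => Finset.sum_congr rfl fun z' hz' => ?_
  rw [prod_setIntegral_Ico (hIndInd z hz z' hz') zero_le_one,
    prod_setIntegral_Ico (hIndLen z hz) zero_le_one,
    prod_setIntegral_Ico (hIndLen z' hz') zero_le_one, prod_setIntegral_Ico hLenSq zero_le_one]

theorem sum_sum_mul_sub_const {α : Type*} (X : Finset α) (w : α → ℝ) (P : α → α → ℝ) (r : ℝ) :
    ∑ z ∈ X, ∑ z' ∈ X, w z * w z' * (P z z' - r - r + r) =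
      -(∑ z ∈ X, w z) ^ 2 * r + ∑ z ∈ X, ∑ z' ∈ X, w z * w z' * P z z' := by
  have hr : (∑ z ∈ X, w z) ^ 2 * r = ∑ z ∈ X, ∑ z' ∈ X, w z * w z' * r := by
    rw [sq, Finset.sum_mul_sum]
    simp only [Finset.sum_mul]
  simp only [mul_sub, mul_add, Finset.sum_add_distrib, Finset.sum_sub_distrib, neg_mul, hr]
  ring

theorem stmt_13_general (d : ℕ) (X : Finset (Fin d → ℝ))
    (hX : ∀ z ∈ X, ∀ k : Fin d, z k ∈ Set.Ico (0 : ℝ) 1) (w : (Fin d → ℝ) → ℝ) :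
    (∫ x in Set.univ.pi fun _ : Fin d => Set.Ico (0 : ℝ) 1,
        ∫ y in Set.univ.pi fun _ : Fin d => Set.Ico (0 : ℝ) 1,
          (perDisc X w x y) ^ 2) =
      -(∑ x ∈ X, w x) ^ 2 / 3 ^ d +
        ∑ x ∈ X, ∑ y ∈ X,
          w x * w y *
            ∏ k : Fin d,
              ((1 : ℝ) / 2 - |x k - y k| + |x k - y k| ^ 2) := by
  have hIndInd z (hz : z ∈ X) z' (hz' : z' ∈ X) k :=
    hasIntervalIntegral_indIndIntegral (hX z hz k) (hX z' hz' k)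
  have hIndLen z (hz : z ∈ X) k := hasIntervalIntegral_indLenIntegral (hX z hz k)
  rw [setIntegral_congr_fun (MeasurableSet.univ_pi fun _ => measurableSet_Ico)
      fun x hx => setIntegral_perDisc_sq hX w fun k => hx k (mem_univ k),
    volume_pi, Measure.restrict_pi_pi,
    integral_pi_sum_sum_prod X _ (fun z z' k a => indIndIntegral a (z k) (z' k))
      (fun z k a => indLenIntegral a (z k)) (fun _ _ => (1 / 3 : ℝ))
      (fun z hz z' hz' k => (hIndInd z hz z' hz' k).integrableOn_Ico zero_le_one)
      (fun z hz k => (hIndLen z hz k).integrableOn_Ico zero_le_one)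
      (fun _ => integrableOn_const measure_Ico_lt_top.ne),
    div_eq_mul_one_div _ ((3 : ℝ) ^ d), ← one_div_pow, ← sum_sum_mul_sub_const]
  refine Finset.sum_congr rfl fun z hz => Finset.sum_congr rfl fun z' hz' => ?_
  rw [prod_setIntegral_Ico (hIndInd z hz z' hz') zero_le_one,
    prod_setIntegral_Ico (hIndLen z hz) zero_le_one,
    prod_setIntegral_Ico (hIndLen z' hz') zero_le_one]
  simp

theorem stmt_13 (d : ℕ) (hd : 0 < d) (X : Finset (Fin d → ℝ))
    (hX : ∀ z ∈ X, ∀ k : Fin d, z k ∈ Set.Ico (0 : ℝ) 1) (w : (Fin d → ℝ) → ℝ) :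
    (∫ x in Set.univ.pi fun _ : Fin d => Set.Ico (0 : ℝ) 1,
        ∫ y in Set.univ.pi fun _ : Fin d => Set.Ico (0 : ℝ) 1,
          (perDisc X w x y) ^ 2) =
      -(∑ x ∈ X, w x) ^ 2 / 3 ^ d +
        ∑ x ∈ X, ∑ y ∈ X,
          w x * w y *
            ∏ k : Fin d,
              ((1 : ℝ) / 2 - |x k - y k| + |x k - y k| ^ 2) :=
  stmt_13_general d X hX w
end

section
/- Let H₀ : {0,...,M-1}^{d-1} → {0,...,M-1} encode a weak Latin hypercube, fix m, n ∈ {0,...,M-1}^{d-1} with Hamming distance δ = #{i : m_i ≠ n_i} ≥ 1, and fix p, q ∈ {0,...,M-1}. Then the number of weak M-Latin hypercubes H with H(m) = p and H(n) = q, divided by the total number Λ of weak M-Latin hypercubes, equals ((M-1)^{δ-1} − (−1)^{δ-1})/(M²(M-1)^{δ-1}) if p = q, and ((M-1)^δ − (−1)^δ)/(M²(M-1)^δ) if p ≠ q. -/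
/-- `F : (Fin e → Fin M) → Fin M` encodes a weak `M`-Latin hypercube of dimension
`e + 1`: for every input coordinate `k`, every choice of the other coordinates and
every target value `p`, there is exactly one value of the `k`-th coordinate mapped
to `p`. -/
def IsWLHFun {e M : ℕ} (F : (Fin e → Fin M) → Fin M) : Prop :=
  ∀ (k : Fin e) (m : Fin e → Fin M) (p : Fin M),
    ∃! v : Fin M, F (Function.update m k v) = p

namespace WLHaux

lemma nat_card_sigma {ι : Type*} [Fintype ι] (f : ι → Type*) [∀ i, Finite (f i)] :
    Nat.card ((i : ι) × f i) = ∑ i, Nat.card (f i) := by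
  letI : ∀ i, Fintype (f i) := fun i => Fintype.ofFinite _
  simp [Nat.card_eq_fintype_card, Fintype.card_sigma]

variable {e M : ℕ}

noncomputable def Nc (m n : Fin e → Fin M) (p q : Fin M) : ℕ :=
  Nat.card {F : (Fin e → Fin M) → Fin M // IsWLHFun F ∧ F m = p ∧ F n = q}

noncomputable def Pc (m : Fin e → Fin M) (p : Fin M) : ℕ :=
  Nat.card {F : (Fin e → Fin M) → Fin M // IsWLHFun F ∧ F m = p}

noncomputable def Lc (e M : ℕ) : ℕ :=
  Nat.card {F : (Fin e → Fin M) → Fin M // IsWLHFun F}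

lemma wlh_comp (σ : Equiv.Perm (Fin M)) {F : (Fin e → Fin M) → Fin M}
    (hF : IsWLHFun F) : IsWLHFun (fun x => σ (F x)) := by
  intro k m p
  obtain ⟨v, hv, hu⟩ := hF k m (σ.symm p)
  exact ⟨v, by simp [hv], fun y hy => hu y (by simpa [Equiv.eq_symm_apply] using hy)⟩

/-- value symmetry: composing with σ on values gives a bijection -/
lemma Pc_eq (m : Fin e → Fin M) (p p' : Fin M) : Pc m p = Pc m p' := by
  classical
  set σ := Equiv.swap p p' with hσ
  refine Nat.card_congr (Equiv.subtypeEquiv (Equiv.arrowCongr (Equiv.refl _) σ) ?_)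
  intro F
  constructor
  · rintro ⟨hF, hm⟩
    refine ⟨wlh_comp σ hF, ?_⟩
    simp [hm, σ, Equiv.swap_apply_left]
  · rintro ⟨hF, hm⟩
    have hF' : IsWLHFun F := by
      have := wlh_comp σ.symm hF
      simpa using this
    refine ⟨hF', ?_⟩
    have : σ (F m) = p' := hm
    have := congrArg σ.symm this
    simpa [σ, Equiv.swap_apply_left] using this

lemma M_mul_Pc (m : Fin e → Fin M) (p : Fin M) : M * Pc m p = Lc e M := by
  have h1 : Lc e M = ∑ p' : Fin M, Pc m p' := by
    have h2 : Lc e M = Nat.card ((p' : Fin M) ×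
        {F : (Fin e → Fin M) → Fin M // IsWLHFun F ∧ F m = p'}) := by
      refine Nat.card_congr ?_
      refine ⟨fun F => ⟨F.1 m, F.1, F.2, rfl⟩, fun s => ⟨s.2.1, s.2.2.1⟩, fun F => rfl, ?_⟩
      rintro ⟨p', F, hF, hm⟩
      subst hm
      rfl
    rw [h2, nat_card_sigma]
    rfl
  rw [h1]
  rw [Finset.sum_congr rfl (fun p' _ => Pc_eq m p' p)]
  simp [Finset.sum_const, mul_comm]

lemma Nc_self_eq (m : Fin e → Fin M) (p : Fin M) : Nc m m p p = Pc m p := by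
  refine Nat.card_congr (Equiv.subtypeEquiv (Equiv.refl _) ?_)
  intro F; simp

lemma Nc_self_ne (m : Fin e → Fin M) {p q : Fin M} (hpq : p ≠ q) : Nc m m p q = 0 := by
  have : IsEmpty {F : (Fin e → Fin M) → Fin M // IsWLHFun F ∧ F m = p ∧ F m = q} :=
    ⟨fun F => hpq (by rw [← F.2.2.1, F.2.2.2])⟩
  rw [Nc, Nat.card_of_isEmpty]

/-- the coordinate-i input permutation map -/
def Phi (i : Fin e) (τ : Equiv.Perm (Fin M)) (x : Fin e → Fin M) : Fin e → Fin M :=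
  Function.update x i (τ (x i))

lemma Phi_Phi (i : Fin e) (τ σ : Equiv.Perm (Fin M)) (x : Fin e → Fin M) :
    Phi i τ (Phi i σ x) = Function.update x i (τ (σ (x i))) := by
  simp [Phi, Function.update_idem]

lemma Phi_update_self (i : Fin e) (τ : Equiv.Perm (Fin M)) (x : Fin e → Fin M) (v : Fin M) :
    Phi i τ (Function.update x i v) = Function.update x i (τ v) := by
  simp [Phi, Function.update_idem]

lemma wlh_comp_phi (i : Fin e) (τ : Equiv.Perm (Fin M)) {F : (Fin e → Fin M) → Fin M}
    (hF : IsWLHFun F) : IsWLHFun (fun x => F (Phi i τ x)) := by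
  intro k m p
  by_cases hk : k = i
  · subst hk
    obtain ⟨w, hw, hu⟩ := hF k m p
    refine ⟨τ.symm w, ?_, fun y hy => ?_⟩
    · show F (Phi k τ (Function.update m k (τ.symm w))) = p
      rw [Phi_update_self]; simpa using hw
    · have hy' : F (Phi k τ (Function.update m k y)) = p := hy
      rw [Phi_update_self] at hy'
      have := hu _ hy'
      simp [← this]
  · have hrw : ∀ v, Phi i τ (Function.update m k v)
        = Function.update (Function.update m i (τ (m i))) k v := by
      intro v
      rw [Phi, Function.update_of_ne (Ne.symm hk), Function.update_comm hk]
    obtain ⟨w, hw, hu⟩ := hF k (Function.update m i (τ (m i))) p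
    refine ⟨w, ?_, fun y hy => ?_⟩
    · show F (Phi i τ (Function.update m k w)) = p
      rw [hrw]; exact hw
    · have hy' : F (Phi i τ (Function.update m k y)) = p := hy
      rw [hrw] at hy'
      exact hu y hy'


lemma Phi_fix (i : Fin e) (τ : Equiv.Perm (Fin M)) (x : Fin e → Fin M)
    (h : τ (x i) = x i) : Phi i τ x = x := by
  rw [Phi, h, Function.update_eq_self]

lemma Phi_swap_invol (i : Fin e) (a b : Fin M) (x : Fin e → Fin M) :
    Phi i (Equiv.swap a b) (Phi i (Equiv.swap a b) x) = x := by
  rw [Phi_Phi, Equiv.swap_apply_self, Function.update_eq_self]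

noncomputable def PhiSwapE (i : Fin e) (a b : Fin M) : Equiv.Perm (Fin e → Fin M) :=
  ⟨Phi i (Equiv.swap a b), Phi i (Equiv.swap a b), Phi_swap_invol i a b, Phi_swap_invol i a b⟩

lemma wlh_phi_swap_iff (i : Fin e) (a b : Fin M) (F : (Fin e → Fin M) → Fin M) :
    IsWLHFun (fun x => F (Phi i (Equiv.swap a b) x)) ↔ IsWLHFun F := by
  constructor
  · intro h
    have h2 := wlh_comp_phi i (Equiv.swap a b) h
    have : (fun x => F (Phi i (Equiv.swap a b) (Phi i (Equiv.swap a b) x))) = F := by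
      funext x; rw [Phi_swap_invol]
    rwa [this] at h2
  · exact wlh_comp_phi i (Equiv.swap a b)

/-- key symmetry: replacing `n i` by any other value `v ≠ m i` keeps the count -/
lemma Nc_update (m n : Fin e → Fin M) (p q : Fin M) (i : Fin e) (hmn : m i ≠ n i)
    (v : Fin M) (hv : v ≠ m i) :
    Nc m (Function.update n i v) p q = Nc m n p q := by
  classical
  set τ := Equiv.swap v (n i) with hτ
  have hτm : τ (m i) = m i :=
    Equiv.swap_apply_of_ne_of_ne (Ne.symm hv) hmn
  have hΦm : Phi i τ m = m := Phi_fix i τ m hτm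
  have hΦn : Phi i τ (Function.update n i v) = n := by
    rw [Phi_update_self]
    rw [Equiv.swap_apply_left, Function.update_eq_self]
  refine (Nat.card_congr (Equiv.subtypeEquiv
    (Equiv.arrowCongr (PhiSwapE i v (n i)) (Equiv.refl (Fin M))) ?_)).symm
  intro F
  have hco : ((Equiv.arrowCongr (PhiSwapE i v (n i)) (Equiv.refl (Fin M))) F)
      = fun x => F (Phi i τ x) := by
    funext x
    simp [Equiv.arrowCongr, PhiSwapE, hτ]
  rw [hco]
  constructor
  · rintro ⟨hF, hm, hn⟩
    refine ⟨(wlh_phi_swap_iff i v (n i) F).2 hF, ?_, ?_⟩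
    · show F (Phi i τ m) = p; rw [hΦm]; exact hm
    · show F (Phi i τ (Function.update n i v)) = q; rw [hΦn]; exact hn
  · rintro ⟨hF, hm, hn⟩
    have hF' : IsWLHFun F := (wlh_phi_swap_iff i v (n i) F).1 hF
    have hm' : F (Phi i τ m) = p := hm
    have hn' : F (Phi i τ (Function.update n i v)) = q := hn
    rw [hΦm] at hm'
    rw [hΦn] at hn'
    exact ⟨hF', hm', hn'⟩

/-- sum over all values at coordinate i -/
lemma sum_Nc (m n : Fin e → Fin M) (p q : Fin M) (i : Fin e) :
    ∑ v : Fin M, Nc m (Function.update n i v) p q = Pc m p := by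
  classical
  have h2 : Pc m p = Nat.card ((v : Fin M) ×
      {F : (Fin e → Fin M) → Fin M //
        IsWLHFun F ∧ F m = p ∧ F (Function.update n i v) = q}) := by
    refine Nat.card_congr ⟨fun F => ⟨(F.2.1 i n q).exists.choose, F.1, F.2.1, F.2.2,
        (F.2.1 i n q).exists.choose_spec⟩, fun s => ⟨s.2.1, s.2.2.1, s.2.2.2.1⟩,
        fun F => rfl, ?_⟩
    rintro ⟨v, F, hF, hm, hq⟩
    have hv : (hF i n q).exists.choose = v := (hF i n q).unique (hF i n q).exists.choose_spec hq
    subst hv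
    rfl
  rw [h2, nat_card_sigma]
  rfl

lemma Lc_pos (hM : 1 ≤ M) : 0 < Lc e M := by
  rcases M with _ | M'
  · omega
  have hne : Nonempty {F : (Fin e → Fin (M' + 1)) → Fin (M' + 1) // IsWLHFun F} := by
    refine ⟨fun x => ∑ i, x i, ?_⟩
    intro k m p
    classical
    have hupd : ∀ v : Fin (M' + 1),
        (∑ i, Function.update m k v i) = v + ∑ i ∈ Finset.univ \ {k}, m i := by
      intro v
      exact Finset.sum_update_of_mem (Finset.mem_univ k) m v
    set c := ∑ i ∈ Finset.univ \ {k}, m i with hc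
    refine ⟨p - c, ?_, fun y hy => ?_⟩
    · show (∑ i, Function.update m k (p - c) i) = p
      rw [hupd]
      exact sub_add_cancel p c
    · have hy' : y + c = p := by rw [← hupd]; exact hy
      exact eq_sub_of_add_eq hy'
  exact Nat.card_pos

lemma key (hM : 2 ≤ M) : ∀ δ : ℕ, ∀ m n : Fin e → Fin M, ∀ p q : Fin M,
    (Finset.univ.filter fun i => m i ≠ n i).card = δ →
    (Nc m n p q : ℤ) * (M : ℤ) ^ 2 * ((M : ℤ) - 1) ^ δ
      = (Lc e M : ℤ) * (if p = q then ((M : ℤ) - 1) ^ δ + ((M : ℤ) - 1) * (-1 : ℤ) ^ δ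
          else ((M : ℤ) - 1) ^ δ - (-1 : ℤ) ^ δ) := by
  intro δ
  induction δ with
  | zero =>
    intro m n p q hd
    classical
    have hmn : m = n := by
      funext i
      by_contra hne
      have : i ∈ Finset.univ.filter fun i => m i ≠ n i := by simp [hne]
      rw [Finset.card_eq_zero] at hd
      simp [hd] at this
    subst hmn
    by_cases hpq : p = q
    · subst hpq
      have h1 : (M : ℤ) * (Pc m p : ℤ) = (Lc e M : ℤ) := by exact_mod_cast M_mul_Pc m p
      rw [Nc_self_eq]
      simp only [if_pos rfl]
      push_cast
      ring_nf
      linear_combination (M : ℤ) * h1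
    · rw [Nc_self_ne m hpq]
      simp [hpq]
  | succ δ ih =>
    intro m n p q hd
    classical
    have hpos : 0 < (Finset.univ.filter fun i => m i ≠ n i).card := by omega
    rw [Finset.card_pos] at hpos
    obtain ⟨i, hi⟩ := hpos
    have hmni : m i ≠ n i := by simpa using hi
    set n' := Function.update n i (m i) with hn'
    have hd' : (Finset.univ.filter fun j => m j ≠ n' j).card = δ := by
      have hset : (Finset.univ.filter fun j => m j ≠ n' j)
          = (Finset.univ.filter fun j => m j ≠ n j).erase i := by
        ext j
        simp only [Finset.mem_filter, Finset.mem_erase, Finset.mem_univ, true_and]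
        by_cases hj : j = i
        · subst hj
          simp [hn', Function.update_self]
        · simp [hn', Function.update_of_ne hj, hj]
      rw [hset, Finset.card_erase_of_mem hi, hd]
      omega
    -- the sum relation
    have hsum : Nc m n' p q + (M - 1) * Nc m n p q = Pc m p := by
      have h0 := sum_Nc m n p q i
      rw [← Finset.add_sum_erase Finset.univ _ (Finset.mem_univ (m i))] at h0
      have hconst : ∀ v ∈ Finset.univ.erase (m i),
          Nc m (Function.update n i v) p q = Nc m n p q := by
        intro v hv
        exact Nc_update m n p q i hmni v (Finset.mem_erase.1 hv).1
      rw [Finset.sum_congr rfl hconst, Finset.sum_const, Finset.card_erase_of_mem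
        (Finset.mem_univ (m i)), Finset.card_univ, Fintype.card_fin, smul_eq_mul] at h0
      exact h0
    have hL : (M : ℤ) * (Pc m p : ℤ) = (Lc e M : ℤ) := by exact_mod_cast M_mul_Pc m p
    have hsumZ : (Nc m n' p q : ℤ) + ((M : ℤ) - 1) * (Nc m n p q : ℤ) = (Pc m p : ℤ) := by
      have h1 : (1 : ℕ) ≤ M := by omega
      have h2 := congrArg (fun t : ℕ => (t : ℤ)) hsum
      push_cast [Nat.cast_sub h1] at h2
      linarith
    have hih := ih m n' p q hd'
    by_cases hpq : p = q
    · simp only [if_pos hpq] at hih ⊢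
      linear_combination ((M : ℤ) * ((M : ℤ) - 1) ^ δ * (M : ℤ)) * hsumZ
        + ((M : ℤ) - 1) ^ δ * (M : ℤ) * hL - hih
    · simp only [if_neg hpq] at hih ⊢
      linear_combination ((M : ℤ) * ((M : ℤ) - 1) ^ δ * (M : ℤ)) * hsumZ
        + ((M : ℤ) - 1) ^ δ * (M : ℤ) * hL - hih

end WLHaux


theorem stmt_14 (M e : ℕ) (hM : 2 ≤ M) (he : 1 ≤ e)
    (m n : Fin e → Fin M) (p q : Fin M)
    (δ : ℕ) (hδ : δ = (Finset.univ.filter fun i : Fin e => m i ≠ n i).card)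
    (hδ1 : 1 ≤ δ) :
    (Nat.card {F : (Fin e → Fin M) → Fin M // IsWLHFun F ∧ F m = p ∧ F n = q} : ℝ) /
        (Nat.card {F : (Fin e → Fin M) → Fin M // IsWLHFun F} : ℝ) =
      if p = q then
        (((M : ℝ) - 1) ^ (δ - 1) - (-1 : ℝ) ^ (δ - 1)) /
          ((M : ℝ) ^ 2 * ((M : ℝ) - 1) ^ (δ - 1))
      else
        (((M : ℝ) - 1) ^ δ - (-1 : ℝ) ^ δ) / ((M : ℝ) ^ 2 * ((M : ℝ) - 1) ^ δ) := by
  classical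
  have hL0 : 0 < WLHaux.Lc e M := WLHaux.Lc_pos (by omega)
  have hkey := WLHaux.key (e := e) hM δ m n p q hδ.symm
  have hMR : (2 : ℝ) ≤ (M : ℝ) := by exact_mod_cast hM
  have hM1 : ((M : ℝ) - 1) ≠ 0 := by linarith
  have hLne : ((WLHaux.Lc e M : ℝ)) ≠ 0 := by positivity
  show ((WLHaux.Nc m n p q : ℝ)) / ((WLHaux.Lc e M : ℝ)) = _
  by_cases hpq : p = q
  · rw [if_pos hpq]
    rw [if_pos hpq] at hkey
    obtain ⟨δ', rfl⟩ : ∃ δ', δ = δ' + 1 := ⟨δ - 1, by omega⟩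
    have hkeyR : (WLHaux.Nc m n p q : ℝ) * (M : ℝ) ^ 2 * ((M : ℝ) - 1) ^ (δ' + 1)
        = (WLHaux.Lc e M : ℝ) * (((M : ℝ) - 1) ^ (δ' + 1) + ((M : ℝ) - 1) * (-1 : ℝ) ^ (δ' + 1)) := by
      exact_mod_cast hkey
    have hk2 : (WLHaux.Nc m n p q : ℝ) * (M : ℝ) ^ 2 * ((M : ℝ) - 1) ^ δ'
        = (WLHaux.Lc e M : ℝ) * (((M : ℝ) - 1) ^ δ' - (-1 : ℝ) ^ δ') := by
      refine mul_right_cancel₀ hM1 ?_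
      linear_combination hkeyR
    have hs : δ' + 1 - 1 = δ' := by omega
    rw [hs]
    have hDne : (M : ℝ) ^ 2 * ((M : ℝ) - 1) ^ δ' ≠ 0 := by
      apply mul_ne_zero
      · positivity
      · exact pow_ne_zero _ hM1
    rw [div_eq_div_iff hLne hDne]
    linear_combination hk2
  · rw [if_neg hpq]
    rw [if_neg hpq] at hkey
    have hkeyR : (WLHaux.Nc m n p q : ℝ) * (M : ℝ) ^ 2 * ((M : ℝ) - 1) ^ δ
        = (WLHaux.Lc e M : ℝ) * (((M : ℝ) - 1) ^ δ - (-1 : ℝ) ^ δ) := by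
      exact_mod_cast hkey
    have hDne : (M : ℝ) ^ 2 * ((M : ℝ) - 1) ^ δ ≠ 0 := by
      apply mul_ne_zero
      · positivity
      · exact pow_ne_zero _ hM1
    rw [div_eq_div_iff hLne hDne]
    linear_combination hkeyR
end
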